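/- arXiv:2012.14797 — 8 statements merged into one kernel-verified Lean document; each statement's English description precedes it below -/
import Mathlib

section
/- Let T > 0 and let γ: ℝ → ℝ² be a smooth T-periodic curve in centroaffine parameterization, [γ(t), γ'(t)] = 1, with centroaffine curvature p(t) := [γ'(t), γ''(t)] > 0 for all t. Suppose γ is extremal for the exponent a = 1, i.e. for every smooth T-periodic function f: ℝ → ℝ, setting v := −(f'/2)·γ + f·γ', the function ε ↦ ∫₀^T [γ' + εv', γ'' + εv''] dt has derivative zero at ε = 0. Then p is constant; consequently γ satisfies the linear equation γ'' = −p·γ with constant p > 0, and its image is an ellipse centered at the origin: there is a positive definite symmetric 2×2 matrix S with ⟨S γ(t), γ(t)⟩ = 1 for all t. -/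
open Real

/-- The determinant (standard area form) on `ℝ²`: `[x,y] = x₁y₂ − x₂y₁`. -/
def br (x y : ℝ × ℝ) : ℝ := x.1 * y.2 - x.2 * y.1

lemma br_self (x : ℝ × ℝ) : br x x = 0 := by simp [br]; ring

lemma HasDerivAt.br2 {x y : ℝ → ℝ × ℝ} {x' y' : ℝ × ℝ} {t : ℝ}
    (hx : HasDerivAt x x' t) (hy : HasDerivAt y y' t) :
    HasDerivAt (fun s => br (x s) (y s)) (br x' (y t) + br (x t) y') t := by
  have hx1 : HasDerivAt (fun s => (x s).1) x'.1 t := by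
    simpa using hx.hasFDerivAt.fst.hasDerivAt
  have hx2 : HasDerivAt (fun s => (x s).2) x'.2 t := by
    simpa using hx.hasFDerivAt.snd.hasDerivAt
  have hy1 : HasDerivAt (fun s => (y s).1) y'.1 t := by
    simpa using hy.hasFDerivAt.fst.hasDerivAt
  have hy2 : HasDerivAt (fun s => (y s).2) y'.2 t := by
    simpa using hy.hasFDerivAt.snd.hasDerivAt
  have H := (hx1.mul hy2).sub (hx2.mul hy1)
  have e : br x' (y t) + br (x t) y' =
      x'.1 * (y t).2 + (x t).1 * y'.2 - (x'.2 * (y t).1 + (x t).2 * y'.1) := by simp [br]; ring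
  rw [e]; exact H

lemma contDiff_top_deriv {E : Type*} [NormedAddCommGroup E] [NormedSpace ℝ E]
    {F : ℝ → E} (h : ContDiff ℝ (⊤ : ℕ∞) F) : ContDiff ℝ (⊤ : ℕ∞) (deriv F) := by
  exact (contDiff_infty_iff_deriv.mp h).2

lemma periodic_deriv' {E : Type*} [NormedAddCommGroup E] [NormedSpace ℝ E]
    {F : ℝ → E} {T : ℝ} (h : Function.Periodic F T) : Function.Periodic (deriv F) T := by
  intro t
  have h2 : (fun s => F (s + T)) = F := funext h
  calc deriv F (t + T) = deriv (fun s => F (s + T)) t := (deriv_comp_add_const F T t).symm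
    _ = deriv F t := by rw [h2]

lemma Continuous.br2 {α : Type*} [TopologicalSpace α] {x y : α → ℝ × ℝ}
    (hx : Continuous x) (hy : Continuous y) : Continuous fun t => br (x t) (y t) := by
  simp only [br]; exact (hx.fst.mul hy.snd).sub (hx.snd.mul hy.fst)

lemma key_var (T : ℝ) (hT : 0 < T) (γ : ℝ → ℝ × ℝ) (hγ : ContDiff ℝ (⊤ : ℕ∞) γ)
    (hper : Function.Periodic γ T)
    (hcentro : ∀ t, br (γ t) (deriv γ t) = 1)
    (f f1 f2 f3 : ℝ → ℝ)
    (hf1c : Continuous f1) (hf2c : Continuous f2) (hf3c : Continuous f3)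
    (hfper : Function.Periodic f T)
    (hf1 : ∀ t, HasDerivAt f (f1 t) t) (hf2 : ∀ t, HasDerivAt f1 (f2 t) t)
    (hf3 : ∀ t, HasDerivAt f2 (f3 t) t)
    (v : ℝ → ℝ × ℝ) (hv : v = fun s => (-(f1 s) / 2) • γ s + f s • deriv γ s)
    (hextK : HasDerivAt (fun ε : ℝ =>
        ∫ t in (0:ℝ)..T,
          br (deriv γ t + ε • deriv v t)
            (deriv (deriv γ) t + ε • deriv (deriv v) t)) 0 0) :
    ∫ t in (0:ℝ)..T, br (deriv γ t) (deriv (deriv γ) t) * f1 t = 0 := by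
  have hfc : Continuous f := continuous_iff_continuousAt.mpr fun t => (hf1 t).continuousAt
  set g1 := deriv γ with hg1def
  set g2 := deriv g1 with hg2def
  set g3 := deriv g2 with hg3def
  have hγ1 : ContDiff ℝ (⊤ : ℕ∞) g1 := contDiff_top_deriv hγ
  have hγ2 : ContDiff ℝ (⊤ : ℕ∞) g2 := contDiff_top_deriv hγ1
  have hγ3 : ContDiff ℝ (⊤ : ℕ∞) g3 := contDiff_top_deriv hγ2
  have hc0 : Continuous γ := hγ.continuous
  have hc1 : Continuous g1 := hγ1.continuous
  have hc2 : Continuous g2 := hγ2.continuous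
  have hc3 : Continuous g3 := hγ3.continuous
  have hd0 : ∀ t, HasDerivAt γ (g1 t) t := fun t => (hγ.differentiable (by simp) t).hasDerivAt
  have hd1 : ∀ t, HasDerivAt g1 (g2 t) t := fun t => (hγ1.differentiable (by simp) t).hasDerivAt
  have hd2 : ∀ t, HasDerivAt g2 (g3 t) t := fun t => (hγ2.differentiable (by simp) t).hasDerivAt
  have h02 : ∀ t, br (γ t) (g2 t) = 0 := by
    intro t
    have h1 : HasDerivAt (fun s => br (γ s) (g1 s)) (br (g1 t) (g1 t) + br (γ t) (g2 t)) t :=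
      (hd0 t).br2 (hd1 t)
    have h2 : (fun s => br (γ s) (g1 s)) = fun _ => (1:ℝ) := funext hcentro
    rw [h2] at h1
    have h3 := h1.unique (hasDerivAt_const t 1)
    simpa [br_self] using h3
  set V1 : ℝ → ℝ × ℝ := fun t =>
    ((-(f1 t) / 2) • g1 t + (-(f2 t) / 2) • γ t) + (f t • g2 t + f1 t • g1 t) with hV1def
  set V2 : ℝ → ℝ × ℝ := fun t =>
    (((-(f1 t) / 2) • g2 t + (-(f2 t) / 2) • g1 t) +
      ((-(f2 t) / 2) • g1 t + (-(f3 t) / 2) • γ t)) +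
    ((f t • g3 t + f1 t • g2 t) + (f1 t • g2 t + f2 t • g1 t)) with hV2def
  have hv1 : ∀ t, HasDerivAt v (V1 t) t := by
    intro t
    rw [hv, hV1def]
    exact (((hf2 t).neg.div_const 2).smul (hd0 t)).add ((hf1 t).smul (hd1 t))
  have hv2 : ∀ t, HasDerivAt V1 (V2 t) t := by
    intro t
    rw [hV1def, hV2def]
    exact ((((hf2 t).neg.div_const 2).smul (hd1 t)).add
      (((hf3 t).neg.div_const 2).smul (hd0 t))).add
      (((hf1 t).smul (hd2 t)).add ((hf2 t).smul (hd1 t)))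
  have hdv : deriv v = V1 := funext fun t => (hv1 t).deriv
  have hddv : deriv (deriv v) = V2 := by
    rw [hdv]; exact funext fun t => (hv2 t).deriv
  have hV1c : Continuous V1 := by
    rw [hV1def]
    exact (((hf1c.neg.div_const 2).smul hc1).add ((hf2c.neg.div_const 2).smul hc0)).add
      ((hfc.smul hc2).add (hf1c.smul hc1))
  have hV2c : Continuous V2 := by
    rw [hV2def]
    exact ((((hf1c.neg.div_const 2).smul hc2).add ((hf2c.neg.div_const 2).smul hc1)).add
      (((hf2c.neg.div_const 2).smul hc1).add ((hf3c.neg.div_const 2).smul hc0))).add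
      (((hfc.smul hc3).add (hf1c.smul hc2)).add ((hf1c.smul hc2).add (hf2c.smul hc1)))
  set I0 : ℝ → ℝ := fun t => br (g1 t) (g2 t) with hI0def
  set I1 : ℝ → ℝ := fun t => br (V1 t) (g2 t) + br (g1 t) (V2 t) with hI1def
  set I2 : ℝ → ℝ := fun t => br (V1 t) (V2 t) with hI2def
  have hI0c : Continuous I0 := hc1.br2 hc2
  have hI1c : Continuous I1 := (hV1c.br2 hc2).add (hc1.br2 hV2c)
  have hI2c : Continuous I2 := hV1c.br2 hV2c
  have hsplit : ∀ ε : ℝ,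
      (∫ t in (0:ℝ)..T, br (g1 t + ε • V1 t) (g2 t + ε • V2 t)) =
        (∫ t in (0:ℝ)..T, I0 t) +
          (ε * ∫ t in (0:ℝ)..T, I1 t) + ε ^ 2 * ∫ t in (0:ℝ)..T, I2 t := by
    intro ε
    have hpt : ∀ t, br (g1 t + ε • V1 t) (g2 t + ε • V2 t) =
        I0 t + (ε * I1 t + ε ^ 2 * I2 t) := by
      intro t
      simp only [hI0def, hI1def, hI2def, br, Prod.fst_add, Prod.snd_add, Prod.smul_fst,
        Prod.smul_snd, smul_eq_mul]
      ring
    rw [intervalIntegral.integral_congr (g := fun t => I0 t + (ε * I1 t + ε ^ 2 * I2 t))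
        (fun t _ => hpt t)]
    rw [intervalIntegral.integral_add (f := I0) (g := fun t => ε * I1 t + ε ^ 2 * I2 t)
        (hI0c.intervalIntegrable _ _)
        (((continuous_const.mul hI1c).add (continuous_const.mul hI2c)).intervalIntegrable _ _),
      intervalIntegral.integral_add (f := fun t => ε * I1 t) (g := fun t => ε ^ 2 * I2 t)
        ((continuous_const.mul hI1c).intervalIntegrable _ _)
        ((continuous_const.mul hI2c).intervalIntegrable _ _),
      intervalIntegral.integral_const_mul, intervalIntegral.integral_const_mul]
    ring
  have hext2 : HasDerivAt (fun ε : ℝ =>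
      (∫ t in (0:ℝ)..T, I0 t) + (ε * ∫ t in (0:ℝ)..T, I1 t)
        + ε ^ 2 * ∫ t in (0:ℝ)..T, I2 t) 0 0 := by
    have := hextK
    rw [hddv, hdv] at this
    have heq : (fun ε : ℝ => ∫ t in (0:ℝ)..T,
        br (g1 t + ε • V1 t) (g2 t + ε • V2 t)) =
        fun ε : ℝ => (∫ t in (0:ℝ)..T, I0 t) + (ε * ∫ t in (0:ℝ)..T, I1 t)
          + ε ^ 2 * ∫ t in (0:ℝ)..T, I2 t := funext hsplit
    rwa [heq] at this
  have hder : HasDerivAt (fun ε : ℝ =>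
      (∫ t in (0:ℝ)..T, I0 t) + (ε * ∫ t in (0:ℝ)..T, I1 t)
        + ε ^ 2 * ∫ t in (0:ℝ)..T, I2 t) (∫ t in (0:ℝ)..T, I1 t) 0 := by
    have h := (((hasDerivAt_id (0:ℝ)).mul_const (∫ t in (0:ℝ)..T, I1 t)).const_add
      (∫ t in (0:ℝ)..T, I0 t)).add ((hasDerivAt_pow 2 (0:ℝ)).mul_const (∫ t in (0:ℝ)..T, I2 t))
    exact h.congr_deriv (by norm_num)
  have hB : (∫ t in (0:ℝ)..T, I1 t) = 0 := hder.unique hext2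
  -- the quantity q t := br (g1 t) (g3 t) is the derivative of p := br g1 g2
  have hq' : ∀ t, HasDerivAt I0 (br (g1 t) (g3 t)) t := by
    intro t
    have := (hd1 t).br2 (hd2 t)
    rw [hI0def]
    simpa [br_self] using this
  set G : ℝ → ℝ := fun t => f2 t / 2 + I0 t * f t with hGdef
  have hG : ∀ t, HasDerivAt G
      (f3 t / 2 + (br (g1 t) (g3 t) * f t + I0 t * f1 t)) t := by
    intro t
    rw [hGdef]
    exact ((hf3 t).div_const 2).add ((hq' t).mul (hf1 t))
  have hGc : Continuous fun t => f3 t / 2 + (br (g1 t) (g3 t) * f t + I0 t * f1 t) :=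
    (hf3c.div_const 2).add (((hc1.br2 hc3).mul hfc).add (hI0c.mul hf1c))
  have hper1 : Function.Periodic g1 T := periodic_deriv' hper
  have hper2 : Function.Periodic g2 T := periodic_deriv' hper1
  have hdf : deriv f = f1 := funext fun t => (hf1 t).deriv
  have hdf1 : deriv f1 = f2 := funext fun t => (hf2 t).deriv
  have hf2per : Function.Periodic f2 T := by
    rw [← hdf1]; exact periodic_deriv' (by rw [← hdf]; exact periodic_deriv' hfper)
  have hGper : G T = G 0 := by
    have e1 := hf2per 0
    have e2 := hper1 0
    have e3 := hper2 0
    have e4 := hfper 0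
    rw [zero_add] at e1 e2 e3 e4
    simp only [hGdef, hI0def, e1, e2, e3, e4]
  have hFTC : (∫ t in (0:ℝ)..T,
      (f3 t / 2 + (br (g1 t) (g3 t) * f t + I0 t * f1 t))) = G T - G 0 :=
    intervalIntegral.integral_eq_sub_of_hasDerivAt (fun t _ => hG t)
      (hGc.intervalIntegrable _ _)
  have hI1eq : ∀ t, I1 t =
      (f3 t / 2 + (br (g1 t) (g3 t) * f t + I0 t * f1 t)) + I0 t * f1 t := by
    intro t
    have hc := hcentro t
    have h0 := h02 t
    simp only [hI1def, hI0def, hV1def, hV2def, br, Prod.fst_add, Prod.snd_add,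
      Prod.smul_fst, Prod.smul_snd, smul_eq_mul] at *
    linear_combination (-(f2 t) / 2) * h0 + (f3 t / 2) * hc
  have hsum : (∫ t in (0:ℝ)..T, I1 t) =
      (∫ t in (0:ℝ)..T, (f3 t / 2 + (br (g1 t) (g3 t) * f t + I0 t * f1 t)))
        + ∫ t in (0:ℝ)..T, I0 t * f1 t := by
    rw [← intervalIntegral.integral_add (g := fun t => I0 t * f1 t) (hGc.intervalIntegrable _ _)
      ((hI0c.mul hf1c).intervalIntegrable _ _)]
    exact intervalIntegral.integral_congr fun t _ => hI1eq t
  have : (∫ t in (0:ℝ)..T, I0 t * f1 t) = 0 := by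
    rw [hsum, hFTC, hGper] at hB
    linarith
  simpa [hI0def] using this

/-- For the exponent `a = 1`, an extremal curve of `ℬ₁(γ) = ∫ p dt` in
centroaffine parameterization has constant centroaffine curvature `p`;
consequently `γ'' = −p·γ` with constant `p > 0` and the image of `γ` is an
ellipse centered at the origin. -/
theorem extremal_a_one_is_conic (T : ℝ) (hT : 0 < T)
    (γ : ℝ → ℝ × ℝ) (hγ : ContDiff ℝ (⊤ : ℕ∞) γ) (hper : Function.Periodic γ T)
    (hcentro : ∀ t, br (γ t) (deriv γ t) = 1)
    (hp : ∀ t, 0 < br (deriv γ t) (deriv (deriv γ) t))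
    (hext : ∀ f : ℝ → ℝ, ContDiff ℝ (⊤ : ℕ∞) f → Function.Periodic f T →
      ∀ v : ℝ → ℝ × ℝ, (v = fun s => (-(deriv f s) / 2) • γ s + f s • deriv γ s) →
      HasDerivAt (fun ε : ℝ =>
        ∫ t in (0:ℝ)..T,
          br (deriv γ t + ε • deriv v t)
            (deriv (deriv γ) t + ε • deriv (deriv v) t)) 0 0) :
    ∃ c : ℝ, 0 < c ∧ (∀ t, br (deriv γ t) (deriv (deriv γ) t) = c) ∧
      (∀ t, deriv (deriv γ) t = -c • γ t) ∧
      ∃ S : Matrix (Fin 2) (Fin 2) ℝ, S.IsSymm ∧ S.PosDef ∧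
        ∀ t, dotProduct (S.mulVec ![(γ t).1, (γ t).2]) ![(γ t).1, (γ t).2] = 1 := by
  have hγ1 : ContDiff ℝ (⊤ : ℕ∞) (deriv γ) := contDiff_top_deriv hγ
  have hγ2 : ContDiff ℝ (⊤ : ℕ∞) (deriv (deriv γ)) := contDiff_top_deriv hγ1
  set p : ℝ → ℝ := fun t => br (deriv γ t) (deriv (deriv γ) t) with hpdef
  have hp_cd : ContDiff ℝ (⊤ : ℕ∞) p := by
    rw [hpdef]; simp only [br]
    exact (hγ1.fst.mul hγ2.snd).sub (hγ1.snd.mul hγ2.fst)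
  have hp_per : Function.Periodic p T := by
    intro t
    have h1 := periodic_deriv' hper t
    have h2 := periodic_deriv' (periodic_deriv' hper) t
    simp only [hpdef]
    rw [h1, h2]
  set q : ℝ → ℝ := deriv p with hqdef
  have hq_cd : ContDiff ℝ (⊤ : ℕ∞) q := contDiff_top_deriv hp_cd
  have hq_per : Function.Periodic q T := periodic_deriv' hp_per
  have hdp : ∀ t, HasDerivAt p (q t) t := fun t => (hp_cd.differentiable (by simp) t).hasDerivAt
  set r : ℝ → ℝ := deriv q with hrdef
  have hr_cd : ContDiff ℝ (⊤ : ℕ∞) r := contDiff_top_deriv hq_cd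
  have hdq : ∀ t, HasDerivAt q (r t) t := fun t => (hq_cd.differentiable (by simp) t).hasDerivAt
  set r2 : ℝ → ℝ := deriv r with hr2def
  have hr2_cd : ContDiff ℝ (⊤ : ℕ∞) r2 := contDiff_top_deriv hr_cd
  have hdr : ∀ t, HasDerivAt r (r2 t) t := fun t => (hr_cd.differentiable (by simp) t).hasDerivAt
  set r3 : ℝ → ℝ := deriv r2 with hr3def
  have hdr2 : ∀ t, HasDerivAt r2 (r3 t) t := fun t => (hr2_cd.differentiable (by simp) t).hasDerivAt
  have hr3_cd : ContDiff ℝ (⊤ : ℕ∞) r3 := contDiff_top_deriv hr2_cd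
  have hKey : ∫ t in (0:ℝ)..T, br (deriv γ t) (deriv (deriv γ) t) * r t = 0 :=
    key_var T hT γ hγ hper hcentro q r r2 r3 hr_cd.continuous hr2_cd.continuous
      hr3_cd.continuous hq_per hdq hdr hdr2
      (fun s => (-(deriv q s) / 2) • γ s + q s • deriv γ s) rfl
      (hext q hq_cd hq_per _ rfl)
  -- integration by parts: ∫ q² = 0
  have hqc : Continuous q := hq_cd.continuous
  have hpc : Continuous p := hp_cd.continuous
  have hrc : Continuous r := hr_cd.continuous
  have hH : ∀ t, HasDerivAt (fun t => p t * q t) (q t * q t + p t * r t) t :=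
    fun t => (hdp t).mul (hdq t)
  have hHint : (∫ t in (0:ℝ)..T, (q t * q t + p t * r t)) = p T * q T - p 0 * q 0 :=
    intervalIntegral.integral_eq_sub_of_hasDerivAt (fun t _ => hH t)
      (((hqc.mul hqc).add (hpc.mul hrc)).intervalIntegrable _ _)
  have hpT : p T = p 0 := by have := hp_per 0; rwa [zero_add] at this
  have hqT : q T = q 0 := by have := hq_per 0; rwa [zero_add] at this
  have hq2 : (∫ t in (0:ℝ)..T, q t * q t) = 0 := by
    rw [intervalIntegral.integral_add (f := fun t => q t * q t) (g := fun t => p t * r t)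
      ((hqc.mul hqc).intervalIntegrable _ _)
      ((hpc.mul hrc).intervalIntegrable _ _)] at hHint
    have : (∫ t in (0:ℝ)..T, p t * r t) = 0 := hKey
    rw [this, hpT, hqT] at hHint
    linarith
  -- q vanishes identically
  have hae : (fun t => q t * q t) =ᵐ[MeasureTheory.volume.restrict (Set.Ioc 0 T)] 0 :=
    (intervalIntegral.integral_eq_zero_iff_of_le_of_nonneg_ae hT.le
      (Filter.Eventually.of_forall fun t => mul_self_nonneg (q t))
      ((hqc.mul hqc).intervalIntegrable _ _)).mp hq2
  have hopen : IsOpen {t : ℝ | q t * q t ≠ 0} :=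
    isOpen_compl_singleton.preimage (hqc.mul hqc)
  have hmeas : MeasureTheory.volume ({t : ℝ | q t * q t ≠ 0} ∩ Set.Ioc 0 T) = 0 := by
    have h0 := hae
    rw [Filter.EventuallyEq, MeasureTheory.ae_iff] at h0
    have hsets : {a : ℝ | ¬ (fun t => q t * q t) a = (0 : ℝ → ℝ) a} = {t : ℝ | q t * q t ≠ 0} := by
      ext a; simp
    rw [hsets, MeasureTheory.Measure.restrict_apply hopen.measurableSet] at h0
    exact h0
  have hempty : {t : ℝ | q t * q t ≠ 0} ∩ Set.Ioo 0 T = ∅ :=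
    (hopen.inter isOpen_Ioo).eq_empty_of_measure_zero
      (MeasureTheory.measure_mono_null
        (Set.inter_subset_inter_right _ Set.Ioo_subset_Ioc_self) hmeas)
  have hqIoo : Set.EqOn q 0 (Set.Ioo 0 T) := by
    intro t ht
    by_contra h
    have : t ∈ {t : ℝ | q t * q t ≠ 0} ∩ Set.Ioo 0 T :=
      ⟨by simpa [mul_self_eq_zero] using h, ht⟩
    rw [hempty] at this
    exact this
  have hqIcc : Set.EqOn q 0 (Set.Icc 0 T) := by
    rw [← closure_Ioo hT.ne]
    exact hqIoo.closure hqc continuous_const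
  have hq0 : ∀ t, q t = 0 := by
    intro t
    obtain ⟨s, hs, heq⟩ := hq_per.exists_mem_Ico₀ hT t
    rw [heq]
    exact hqIcc ⟨hs.1, hs.2.le⟩
  have hpconst : ∀ t, p t = p 0 :=
    fun t => is_const_of_deriv_eq_zero (hp_cd.differentiable (by simp)) (fun x => hq0 x) t 0
  -- derivations for the ODE
  have hd0 : ∀ t, HasDerivAt γ (deriv γ t) t :=
    fun t => (hγ.differentiable (by simp) t).hasDerivAt
  have hd1 : ∀ t, HasDerivAt (deriv γ) (deriv (deriv γ) t) t :=
    fun t => (hγ1.differentiable (by simp) t).hasDerivAt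
  have h02 : ∀ t, br (γ t) (deriv (deriv γ) t) = 0 := by
    intro t
    have h1 : HasDerivAt (fun s => br (γ s) (deriv γ s))
        (br (deriv γ t) (deriv γ t) + br (γ t) (deriv (deriv γ) t)) t :=
      (hd0 t).br2 (hd1 t)
    have h2 : (fun s => br (γ s) (deriv γ s)) = fun _ => (1:ℝ) := funext hcentro
    rw [h2] at h1
    have h3 := h1.unique (hasDerivAt_const t 1)
    simpa [br_self] using h3
  have hODE : ∀ t, deriv (deriv γ) t = -(p 0) • γ t := by
    intro t
    have hc := hcentro t
    have h0 := h02 t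
    have hpt : br (deriv γ t) (deriv (deriv γ) t) = p 0 := hpconst t
    simp only [br] at hc h0 hpt
    refine Prod.ext ?_ ?_ <;>
      simp only [Prod.smul_fst, Prod.smul_snd, smul_eq_mul]
    · linear_combination (-(deriv (deriv γ) t).1) * hc + (deriv γ t).1 * h0 - (γ t).1 * hpt
    · linear_combination (-(deriv (deriv γ) t).2) * hc + (deriv γ t).2 * h0 - (γ t).2 * hpt
  refine ⟨p 0, hp 0, fun t => hpconst t, hODE, ?_⟩
  -- the conserved quadratic form
  have hconic : ∀ t, p 0 * (br (γ 0) (γ t)) ^ 2 + (br (deriv γ 0) (γ t)) ^ 2 = 1 := by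
    intro t
    have hw : ∀ s, HasDerivAt
        (fun s => p 0 * (br (γ s) (γ t)) ^ 2 + (br (deriv γ s) (γ t)) ^ 2) 0 s := by
      intro s
      have hb1 : HasDerivAt (fun s => br (γ s) (γ t)) (br (deriv γ s) (γ t)) s := by
        have := (hd0 s).br2 (hasDerivAt_const s (γ t))
        simpa [br] using this
      have hb2 : HasDerivAt (fun s => br (deriv γ s) (γ t))
          (br (deriv (deriv γ) s) (γ t)) s := by
        have := (hd1 s).br2 (hasDerivAt_const s (γ t))
        simpa [br] using this
      have h := ((hb1.pow 2).const_mul (p 0)).add (hb2.pow 2)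
      have hval : br (deriv (deriv γ) s) (γ t) = -(p 0) * br (γ s) (γ t) := by
        rw [hODE s]
        simp only [br, Prod.smul_fst, Prod.smul_snd, smul_eq_mul]
        ring
      refine h.congr_deriv ?_
      rw [hval]
      ring
    have hdiff : Differentiable ℝ
        (fun s => p 0 * (br (γ s) (γ t)) ^ 2 + (br (deriv γ s) (γ t)) ^ 2) :=
      fun s => (hw s).differentiableAt
    have hconst := is_const_of_deriv_eq_zero hdiff (fun s => (hw s).deriv) 0 t
    have e1 : br (γ t) (γ t) = 0 := br_self _
    have e2 : br (deriv γ t) (γ t) = -1 := by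
      have := hcentro t
      simp only [br] at this ⊢
      linarith
    rw [e1, e2] at hconst
    norm_num at hconst
    linarith [hconst]
  set c := p 0 with hcdef
  have hcpos : 0 < c := hp 0
  set A := γ 0 with hAdef
  set B := deriv γ 0 with hBdef
  have hAB : A.1 * B.2 - A.2 * B.1 = 1 := by
    have := hcentro 0
    simpa [br] using this
  refine ⟨!![c * A.2 ^ 2 + B.2 ^ 2, -(c * A.1 * A.2 + B.1 * B.2);
      -(c * A.1 * A.2 + B.1 * B.2), c * A.1 ^ 2 + B.1 ^ 2], ?_,
      Matrix.PosDef.of_dotProduct_mulVec_pos ?_ ?_, ?_⟩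
  · -- symmetric
    unfold Matrix.IsSymm
    ext i j
    fin_cases i <;> fin_cases j <;> simp
  · -- Hermitian
    rw [Matrix.IsHermitian, Matrix.conjTranspose_eq_transpose_of_trivial]
    ext i j
    fin_cases i <;> fin_cases j <;> simp
  · -- positivity
    intro x hx
    have hd : dotProduct (star x)
        ((!![c * A.2 ^ 2 + B.2 ^ 2, -(c * A.1 * A.2 + B.1 * B.2);
          -(c * A.1 * A.2 + B.1 * B.2), c * A.1 ^ 2 + B.1 ^ 2]).mulVec x) =
        c * (A.1 * x 1 - A.2 * x 0) ^ 2 + (B.1 * x 1 - B.2 * x 0) ^ 2 := by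
      simp [dotProduct, Matrix.mulVec, Fin.sum_univ_two]
      ring
    rw [hd]
    rcases lt_or_eq_of_le (by positivity :
        (0:ℝ) ≤ c * (A.1 * x 1 - A.2 * x 0) ^ 2 + (B.1 * x 1 - B.2 * x 0) ^ 2) with h | h
    · exact h
    · exfalso
      have hs2 : (A.1 * x 1 - A.2 * x 0) ^ 2 ≤ 0 := by
        nlinarith [sq_nonneg (B.1 * x 1 - B.2 * x 0)]
      have ht2 : (B.1 * x 1 - B.2 * x 0) ^ 2 ≤ 0 := by
        nlinarith [sq_nonneg (A.1 * x 1 - A.2 * x 0), mul_nonneg hcpos.le (sq_nonneg (A.1 * x 1 - A.2 * x 0))]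
      have h1 : A.1 * x 1 - A.2 * x 0 = 0 :=
        (pow_eq_zero_iff two_ne_zero).mp (le_antisymm hs2 (sq_nonneg _))
      have h2 : B.1 * x 1 - B.2 * x 0 = 0 :=
        (pow_eq_zero_iff two_ne_zero).mp (le_antisymm ht2 (sq_nonneg _))
      have hx0 : x 0 = 0 := by linear_combination B.1 * h1 - A.1 * h2 - x 0 * hAB
      have hx1 : x 1 = 0 := by linear_combination B.2 * h1 - A.2 * h2 - x 1 * hAB
      exact hx (funext fun i => by fin_cases i <;> assumption)
  · -- the conic equation
    intro t
    have hct := hconic t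
    simp only [br] at hct
    simp [dotProduct, Matrix.mulVec, Fin.sum_univ_two]
    linear_combination hct
end

section
/- Let a ∈ (1/2, 1) and set b := 1/(a−1) (so that b < −2). If F: ℝ → ℝ is a smooth, positive, periodic function satisfying the ODE F''' = −2(2+b)·F^b·F', then F is constant. Consequently, for a ∈ (1/2, 1) the extremal curves of the functional ∫ p^a dt (in centroaffine parameterization) have constant centroaffine curvature. -/
open Real
open scoped ContDiff

lemma periodic_deriv_aux {f : ℝ → ℝ} {T : ℝ} (h : Function.Periodic f T) :
    Function.Periodic (deriv f) T := by
  intro t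
  have hfun : (fun x => f (x + T)) = f := funext h
  calc deriv f (t + T) = deriv (fun x => f (x + T)) t := (deriv_comp_add_const f T t).symm
    _ = deriv f t := by rw [hfun]

/-- For `a ∈ (1/2, 1)` (so `b = 1/(a−1) < −2`), every smooth positive periodic
solution of the Euler–Lagrange equation `F''' = −2(2+b)·F^b·F'` is constant. -/
theorem rigidity_half_one (a : ℝ) (ha : a ∈ Set.Ioo (1/2 : ℝ) 1)
    (b : ℝ) (hb : b = 1 / (a - 1))
    (F : ℝ → ℝ) (hF : ContDiff ℝ (⊤ : ℕ∞) F) (hpos : ∀ t, 0 < F t)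
    (T : ℝ) (hT : 0 < T) (hper : Function.Periodic F T)
    (hode : ∀ t, deriv (deriv (deriv F)) t = -2 * (2 + b) * F t ^ b * deriv F t) :
    ∀ s t : ℝ, F s = F t := by
  -- constants
  obtain ⟨ha1, ha2⟩ := ha
  have hane : a - 1 < 0 := by linarith
  have hblt : b < -2 := by
    rw [hb]
    rw [div_lt_iff_of_neg hane]
    linarith
  have hc : 0 < -2 * (2 + b) := by nlinarith
  set c : ℝ := -2 * (2 + b) with hcdef
  -- derivatives
  set F1 : ℝ → ℝ := deriv F with hF1def
  set F2 : ℝ → ℝ := deriv F1 with hF2def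
  set F3 : ℝ → ℝ := deriv F2 with hF3def
  have hFd : Differentiable ℝ F := hF.differentiable (by simp)
  have hFi : ContDiff ℝ ∞ F := hF.of_le (by simp)
  have hF1s : ContDiff ℝ ∞ F1 := (contDiff_infty_iff_deriv.mp hFi).2
  have hF2s : ContDiff ℝ ∞ F2 := (contDiff_infty_iff_deriv.mp hF1s).2
  have hF3s : ContDiff ℝ ∞ F3 := (contDiff_infty_iff_deriv.mp hF2s).2
  have hF1d : Differentiable ℝ F1 := hF1s.differentiable (by norm_num)
  have hF2d : Differentiable ℝ F2 := hF2s.differentiable (by norm_num)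
  -- periodicity of derivatives
  have hper1 : Function.Periodic F1 T := periodic_deriv_aux hper
  have hper2 : Function.Periodic F2 T := periodic_deriv_aux hper1
  -- the key integrand g = c * F^b * F1^2 + F2^2
  set g : ℝ → ℝ := fun t => c * F t ^ b * F1 t ^ 2 + F2 t ^ 2 with hgdef
  have hgnonneg : ∀ t, 0 ≤ g t := by
    intro t
    have h1 : 0 < F t ^ b := Real.rpow_pos_of_pos (hpos t) b
    have h2 : 0 ≤ c * F t ^ b * F1 t ^ 2 :=
      mul_nonneg (mul_nonneg hc.le h1.le) (sq_nonneg _)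
    show 0 ≤ c * F t ^ b * F1 t ^ 2 + F2 t ^ 2
    exact add_nonneg h2 (sq_nonneg _)
  have hgcont : Continuous g := by
    apply Continuous.add
    · apply Continuous.mul
      · exact continuous_const.mul ((hF.continuous.rpow_const (fun t => Or.inl (hpos t).ne')))
      · exact (hF1s.continuous.pow 2)
    · exact hF2s.continuous.pow 2
  -- FTC: ∫₀ᵀ (F2*F1)' = 0, and (F2*F1)' = F3*F1 + F2^2 = g
  have hderivG : ∀ t, HasDerivAt (fun s => F2 s * F1 s) (g t) t := by
    intro t
    have h1 : HasDerivAt F1 (F2 t) t := (hF1d t).hasDerivAt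
    have h2 : HasDerivAt F2 (F3 t) t := (hF2d t).hasDerivAt
    have := h2.mul h1
    have hval : F3 t * F1 t + F2 t * F2 t = g t := by
      have h3 := hode t
      simp only [hgdef]
      rw [show F3 t = deriv (deriv (deriv F)) t from rfl] at *
      rw [h3]
      ring
    rw [← hval]
    exact this
  have hint : (∫ t in (0:ℝ)..T, g t) = 0 := by
    rw [intervalIntegral.integral_eq_sub_of_hasDerivAt
      (fun t _ => hderivG t) (hgcont.intervalIntegrable 0 T)]
    have e2 : F2 T = F2 0 := by simpa using hper2 0
    have e1 : F1 T = F1 0 := by simpa using hper1 0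
    rw [e1, e2]; ring
  -- g = 0 on [0, T]
  have hgzero : ∀ t ∈ Set.Icc (0:ℝ) T, g t = 0 := by
    intro t ht
    by_contra hne
    have hgt : 0 < g t := lt_of_le_of_ne (hgnonneg t) (Ne.symm hne)
    have : (∫ x in (0:ℝ)..T, (0:ℝ)) < ∫ x in (0:ℝ)..T, g x :=
      intervalIntegral.integral_lt_integral_of_continuousOn_of_le_of_exists_lt hT
        continuousOn_const hgcont.continuousOn
        (fun x _ => hgnonneg x) ⟨t, ht, by simpa using hgt⟩
    simp [hint] at this
  -- hence F1 = 0 on [0, T]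
  have hF1zero : ∀ t ∈ Set.Icc (0:ℝ) T, F1 t = 0 := by
    intro t ht
    have h0 := hgzero t ht
    have h1 : 0 < F t ^ b := Real.rpow_pos_of_pos (hpos t) b
    have h2 : 0 ≤ c * F t ^ b * F1 t ^ 2 := by positivity
    have h3 : 0 ≤ F2 t ^ 2 := sq_nonneg _
    have h4 : c * F t ^ b * F1 t ^ 2 = 0 := by
      simp only [hgdef] at h0; nlinarith
    have h5 : F1 t ^ 2 = 0 := by
      have hcb : 0 < c * F t ^ b := by positivity
      exact (mul_eq_zero.mp h4).resolve_left hcb.ne'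
    exact pow_eq_zero_iff (n := 2) (by norm_num) |>.mp h5
  -- F1 = 0 everywhere by periodicity
  have hF1all : ∀ t, F1 t = 0 := by
    intro t
    obtain ⟨y, hy, hyeq⟩ := hper1.exists_mem_Ico₀ hT t
    rw [hyeq]
    exact hF1zero y ⟨hy.1, hy.2.le⟩
  -- conclude
  exact fun s t => is_const_of_deriv_eq_zero hFd hF1all s t
end

section
/- Let n be a positive integer, let a ∈ ℝ \ {0, 1}, and set b := 1/(a−1). Call a smooth 2πn-periodic function f: ℝ → ℝ trivial if it is a linear combination of 1, cos t, sin t, cos 2t, sin 2t. Then the following are equivalent: (i) there exists a non-trivial smooth 2πn-periodic function f such that q := 2f' + (1/2)f''' satisfies q'' = −2(b+2)·q (the linearized criticality equation for the n-fold unit circle); (ii) there exists a positive integer k with k ≠ n and k ≠ 2n such that a = (k² − 2n²)/(k² − 4n²). In particular, for a = 1/3 the n-fold circle admits no non-trivial infinitesimal deformation in the class of critical curves. -/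
open Real

/-- A `2πn`-periodic deformation function is trivial if it is a linear
combination of `1, cos t, sin t, cos 2t, sin 2t` (coming from the
`SL(2,ℝ)`-action and translations). -/
def IsTrivialDeformation (f : ℝ → ℝ) : Prop :=
  ∃ c₀ c₁ c₂ c₃ c₄ : ℝ, f = fun t =>
    c₀ + c₁ * Real.cos t + c₂ * Real.sin t + c₃ * Real.cos (2 * t) + c₄ * Real.sin (2 * t)

/-- There is a non-trivial smooth `2πn`-periodic `f` whose associated
first-order curvature perturbation `q = 2f' + (1/2)f'''` satisfies the
linearized criticality equation `q'' = −2(b+2)q` at the `n`-fold circle. -/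
def ExistsNontrivialInfDeformation (n : ℕ) (b : ℝ) : Prop :=
  ∃ f : ℝ → ℝ, ContDiff ℝ (⊤ : ℕ∞) f ∧ Function.Periodic f (2 * π * n) ∧
    ¬ IsTrivialDeformation f ∧
    ∀ t, deriv (deriv (fun s => 2 * deriv f s + (1/2) * deriv (deriv (deriv f)) s)) t =
      -2 * (b + 2) * (2 * deriv f t + (1/2) * deriv (deriv (deriv f)) t)

/-! ### Auxiliary lemmas -/

private lemma hasDerivAt_cos_omega (ω t : ℝ) :
    HasDerivAt (fun s => Real.cos (ω * s)) (-ω * Real.sin (ω * t)) t := by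
  have h := (Real.hasDerivAt_cos (ω * t)).comp t ((hasDerivAt_id t).const_mul ω)
  exact h.congr_deriv (by ring)

private lemma hasDerivAt_sin_omega (ω t : ℝ) :
    HasDerivAt (fun s => Real.sin (ω * s)) (ω * Real.cos (ω * t)) t := by
  have h := (Real.hasDerivAt_sin (ω * t)).comp t ((hasDerivAt_id t).const_mul ω)
  exact h.congr_deriv (by ring)

private lemma eq_of_hasDerivAt_zero {F : ℝ → ℝ} (hF : ∀ t, HasDerivAt F 0 t) (t : ℝ) :
    F t = F 0 :=
  is_const_of_deriv_eq_zero (fun x => (hF x).differentiableAt) (fun x => (hF x).deriv) t 0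

private lemma periodic_deriv'_s9 (f : ℝ → ℝ) (T : ℝ) (h : Function.Periodic f T) :
    Function.Periodic (deriv f) T := by
  intro t
  have : (fun x => f (x + T)) = f := funext fun x => h x
  rw [← deriv_comp_add_const f T t, this]

/-- Uniqueness for `u'' = -ω² u`. -/
private lemma harmonic_unique {ω : ℝ} (hω : ω ≠ 0) (u v : ℝ → ℝ)
    (hu : ∀ t, HasDerivAt u (v t) t)
    (hv : ∀ t, HasDerivAt v (-(ω^2) * u t) t) (t : ℝ) :
    u t = u 0 * Real.cos (ω * t) + (v 0 / ω) * Real.sin (ω * t) := by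
  have hdE : ∀ s, HasDerivAt
      (fun s => u s - (u 0 * Real.cos (ω * s) + v 0 / ω * Real.sin (ω * s)))
      (v s - (u 0 * (-ω * Real.sin (ω * s)) + v 0 / ω * (ω * Real.cos (ω * s)))) s := fun s =>
    (hu s).sub (((hasDerivAt_cos_omega ω s).const_mul (u 0)).add
      ((hasDerivAt_sin_omega ω s).const_mul (v 0 / ω)))
  have hdE' : ∀ s, HasDerivAt
      (fun s => v s - (u 0 * (-ω * Real.sin (ω * s)) + v 0 / ω * (ω * Real.cos (ω * s))))
      (-(ω^2) * (u s - (u 0 * Real.cos (ω * s) + v 0 / ω * Real.sin (ω * s)))) s := by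
    intro s
    have h1 : HasDerivAt (fun s => u 0 * (-ω * Real.sin (ω * s)))
        (u 0 * (-ω * (ω * Real.cos (ω * s)))) s :=
      ((hasDerivAt_sin_omega ω s).const_mul (-ω)).const_mul (u 0)
    have h2 : HasDerivAt (fun s => v 0 / ω * (ω * Real.cos (ω * s)))
        (v 0 / ω * (ω * (-ω * Real.sin (ω * s)))) s :=
      ((hasDerivAt_cos_omega ω s).const_mul ω).const_mul (v 0 / ω)
    have h := (hv s).sub (h1.add h2)
    refine h.congr_deriv (Eq.symm ?_)
    field_simp
    ring
  set E : ℝ → ℝ := fun s => u s - (u 0 * Real.cos (ω * s) + v 0 / ω * Real.sin (ω * s)) with hE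
  set E' : ℝ → ℝ := fun s => v s - (u 0 * (-ω * Real.sin (ω * s)) + v 0 / ω * (ω * Real.cos (ω * s))) with hE'
  have hdH : ∀ s, HasDerivAt (fun s => E' s * E' s + ω^2 * (E s * E s)) 0 s := by
    intro s
    have h := ((hdE' s).mul (hdE' s)).add (((hdE s).mul (hdE s)).const_mul (ω^2))
    refine h.congr_deriv (Eq.symm ?_)
    ring
  have hH0 : E' 0 * E' 0 + ω^2 * (E 0 * E 0) = 0 := by
    have hE0 : E 0 = 0 := by simp [hE]
    have hE'0 : E' 0 = 0 := by simp only [hE']; field_simp; simp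
    rw [hE0, hE'0]; ring
  have hHt := eq_of_hasDerivAt_zero hdH t
  rw [hH0] at hHt
  have hEt : E t = 0 := by
    have hω2 : 0 < ω^2 := pow_two_pos_of_ne_zero hω
    have h3 : E t * E t = 0 := by
      nlinarith [mul_self_nonneg (E' t), mul_self_nonneg (E t)]
    exact mul_self_eq_zero.mp h3
  have h2 : u t - (u 0 * Real.cos (ω * t) + v 0 / ω * Real.sin (ω * t)) = 0 := hEt
  linarith

/-- Uniqueness for `u' = c u`. -/
private lemma exp_unique {c : ℝ} (u : ℝ → ℝ)
    (hu : ∀ t, HasDerivAt u (c * u t) t) (t : ℝ) :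
    u t = u 0 * Real.exp (c * t) := by
  have hdV : ∀ s, HasDerivAt (fun s => u s * Real.exp (-(c * s))) 0 s := by
    intro s
    have hexp : HasDerivAt (fun x => Real.exp (-(c * x))) (Real.exp (-(c * s)) * (-c)) s := by
      have h := (((hasDerivAt_id s).const_mul c).neg).exp
      simpa using h
    have h := (hu s).mul hexp
    refine h.congr_deriv (Eq.symm ?_)
    ring
  have h := eq_of_hasDerivAt_zero hdV t
  simp only [mul_zero, neg_zero, Real.exp_zero, mul_one] at h
  rw [Real.exp_neg] at h
  have hpos : Real.exp (c * t) > 0 := Real.exp_pos _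
  field_simp at h
  linarith

/-- If `f' = α cos t + β sin t + γ cos 2t + δ sin 2t` then `f` is trivial. -/
private lemma trivial_of_deriv_form (f : ℝ → ℝ) (α β γ δ : ℝ)
    (h : ∀ t, HasDerivAt f
      (α * Real.cos t + β * Real.sin t + γ * Real.cos (2*t) + δ * Real.sin (2*t)) t) :
    IsTrivialDeformation f := by
  refine ⟨f 0 + β + δ/2, -β, α, -(δ/2), γ/2, ?_⟩
  have hD : ∀ s, HasDerivAt (fun t => f t - ((f 0 + β + δ/2) + (-β) * Real.cos t
      + α * Real.sin t + (-(δ/2)) * Real.cos (2*t) + (γ/2) * Real.sin (2*t))) 0 s := by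
    intro s
    have hg : HasDerivAt (fun t => (f 0 + β + δ/2) + (-β) * Real.cos t
        + α * Real.sin t + (-(δ/2)) * Real.cos (2*t) + (γ/2) * Real.sin (2*t))
        (α * Real.cos s + β * Real.sin s + γ * Real.cos (2*s) + δ * Real.sin (2*s)) s := by
      have h1 := ((hasDerivAt_const s (f 0 + β + δ/2)).add
          ((Real.hasDerivAt_cos s).const_mul (-β))).add
          ((Real.hasDerivAt_sin s).const_mul α)
      have h2 := (h1.add ((hasDerivAt_cos_omega 2 s).const_mul (-(δ/2)))).add
          ((hasDerivAt_sin_omega 2 s).const_mul (γ/2))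
      refine h2.congr_deriv (Eq.symm ?_)
      ring
    have := (h s).sub hg
    exact this.congr_deriv (sub_self _)
  funext t
  have := eq_of_hasDerivAt_zero hD t
  simp only [Real.cos_zero, Real.sin_zero, mul_zero, mul_one] at this
  linarith [this]

/-- derivative of a trivial-form function, in trivial form again -/
private lemma deriv_triv (c₀ c₁ c₂ c₃ c₄ : ℝ) :
    deriv (fun t => c₀ + c₁ * Real.cos t + c₂ * Real.sin t
        + c₃ * Real.cos (2 * t) + c₄ * Real.sin (2 * t))
      = fun t => (0:ℝ) + c₂ * Real.cos t + (-c₁) * Real.sin t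
        + (2*c₄) * Real.cos (2 * t) + (-(2*c₃)) * Real.sin (2 * t) := by
  funext t
  have h1 := ((hasDerivAt_const t c₀).add
      ((Real.hasDerivAt_cos t).const_mul c₁)).add
      ((Real.hasDerivAt_sin t).const_mul c₂)
  have h2 := (h1.add ((hasDerivAt_cos_omega 2 t).const_mul c₃)).add
      ((hasDerivAt_sin_omega 2 t).const_mul c₄)
  refine h2.deriv.trans ?_
  ring

/-- derivative of an `A cos ωt + B sin ωt` form -/
private lemma deriv_AB (A B ω : ℝ) :
    deriv (fun t => A * Real.cos (ω * t) + B * Real.sin (ω * t))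
      = fun t => (B*ω) * Real.cos (ω * t) + (-(A*ω)) * Real.sin (ω * t) := by
  funext t
  have h := ((hasDerivAt_cos_omega ω t).const_mul A).add
      ((hasDerivAt_sin_omega ω t).const_mul B)
  refine h.deriv.trans ?_
  ring

private lemma cos_omega_nontrivial {ω : ℝ} (hω : 0 < ω) (h1 : ω ≠ 1) (h2 : ω ≠ 2) :
    ¬ IsTrivialDeformation (fun t => Real.cos (ω * t)) := by
  rintro ⟨c₀, c₁, c₂, c₃, c₄, h⟩
  have hD1 : deriv (fun t => Real.cos (ω * t)) = fun t => (0:ℝ) * Real.cos (ω * t) + (-ω) * Real.sin (ω * t) := by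
    funext t; rw [(hasDerivAt_cos_omega ω t).deriv]; ring
  have hD2 : deriv (deriv (fun t => Real.cos (ω * t))) = fun t => (-(ω^2)) * Real.cos (ω * t) + (0:ℝ) * Real.sin (ω * t) := by
    rw [hD1, deriv_AB]; funext t; ring
  have hD3 : deriv (deriv (deriv (fun t => Real.cos (ω * t)))) = fun t => (0:ℝ) * Real.cos (ω * t) + (ω^3) * Real.sin (ω * t) := by
    rw [hD2, deriv_AB]; funext t; ring
  have hD4 : deriv (deriv (deriv (deriv (fun t => Real.cos (ω * t))))) = fun t => (ω^4) * Real.cos (ω * t) + (0:ℝ) * Real.sin (ω * t) := by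
    rw [hD3, deriv_AB]; funext t; ring
  have hD5 : deriv (deriv (deriv (deriv (deriv (fun t => Real.cos (ω * t)))))) = fun t => (0:ℝ) * Real.cos (ω * t) + (-(ω^5)) * Real.sin (ω * t) := by
    rw [hD4, deriv_AB]; funext t; ring
  have key : ∀ t, deriv (deriv (deriv (deriv (deriv (fun t => Real.cos (ω * t)))))) t
      + 5 * deriv (deriv (deriv (fun t => Real.cos (ω * t)))) t
      + 4 * deriv (fun t => Real.cos (ω * t)) t = 0 := by
    intro t
    rw [h, deriv_triv, deriv_triv, deriv_triv, deriv_triv, deriv_triv]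
    ring
  have hkey := key (π / (2 * ω))
  rw [hD5, hD3, hD1] at hkey
  simp only [] at hkey
  have hsin : Real.sin (ω * (π / (2 * ω))) = 1 := by
    have harg : ω * (π / (2 * ω)) = π / 2 := by field_simp
    rw [harg, Real.sin_pi_div_two]
  rw [hsin] at hkey
  have hfac : ω * ((ω^2 - 1) * (ω^2 - 4)) = 0 := by linear_combination -hkey
  rcases mul_eq_zero.mp hfac with h' | h'
  · exact absurd h' hω.ne'
  rcases mul_eq_zero.mp h' with h' | h'
  · have : (ω - 1) * (ω + 1) = 0 := by linear_combination h'
    rcases mul_eq_zero.mp this with h'' | h''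
    · exact h1 (by linarith)
    · linarith
  · have : (ω - 2) * (ω + 2) = 0 := by linear_combination h'
    rcases mul_eq_zero.mp this with h'' | h''
    · exact h2 (by linarith)
    · linarith

private lemma reverse_dir (n : ℕ) (hn : 0 < n) (a b : ℝ) (hb : b = 1/(a-1))
    (k : ℕ) (hk : 0 < k) (hkn : k ≠ n) (hk2n : k ≠ 2*n)
    (hak : a = ((k:ℝ)^2 - 2*(n:ℝ)^2)/((k:ℝ)^2 - 4*(n:ℝ)^2)) :
    ExistsNontrivialInfDeformation n b := by
  have hn0 : (n:ℝ) ≠ 0 := Nat.cast_ne_zero.mpr hn.ne'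
  have hk0 : (k:ℝ) ≠ 0 := Nat.cast_ne_zero.mpr hk.ne'
  have hden : (k:ℝ)^2 - 4*(n:ℝ)^2 ≠ 0 := by
    intro h
    have h2 : ((k:ℝ) - 2*n) * ((k:ℝ) + 2*n) = 0 := by linear_combination h
    have hpos : (0:ℝ) < (k:ℝ) + 2*n := by positivity
    rcases mul_eq_zero.mp h2 with h3 | h3
    · apply hk2n
      have : (k:ℝ) = 2*(n:ℝ) := by linarith
      exact_mod_cast this
    · linarith
  set ω : ℝ := (k:ℝ)/(n:ℝ) with hω
  have hωpos : 0 < ω := by positivity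
  have hω1 : ω ≠ 1 := by
    intro h
    apply hkn
    have : (k:ℝ) = (n:ℝ) := by rw [hω] at h; field_simp at h; exact_mod_cast h
    exact_mod_cast this
  have hω2 : ω ≠ 2 := by
    intro h
    apply hk2n
    have : (k:ℝ) = 2*(n:ℝ) := by rw [hω] at h; field_simp at h; linarith
    exact_mod_cast this
  have ha1' : a - 1 = 2*(n:ℝ)^2/((k:ℝ)^2-4*(n:ℝ)^2) := by
    rw [hak, div_sub_one hden]; ring
  have hbval : b = ((k:ℝ)^2-4*(n:ℝ)^2)/(2*(n:ℝ)^2) := by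
    rw [hb, ha1', one_div_div]
  have hb2 : -2*(b+2) = -(ω^2) := by
    rw [hbval, hω]; field_simp; ring
  refine ⟨fun t => Real.cos (ω * t), ?_, ?_, cos_omega_nontrivial hωpos hω1 hω2, ?_⟩
  · exact Real.contDiff_cos.comp (contDiff_const.mul contDiff_id)
  · intro t
    have harg : ω * (t + 2*π*n) = ω*t + (k:ℤ) * (2*π) := by
      push_cast
      rw [hω]
      field_simp
    show Real.cos (ω * (t + 2*π*n)) = Real.cos (ω * t)
    rw [harg, Real.cos_add_int_mul_two_pi]
  · intro t
    have hD1 : deriv (fun t => Real.cos (ω * t)) = fun t => (0:ℝ) * Real.cos (ω * t) + (-ω) * Real.sin (ω * t) := by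
      funext s; rw [(hasDerivAt_cos_omega ω s).deriv]; ring
    have hD2 : deriv (deriv (fun t => Real.cos (ω * t))) = fun t => (-(ω^2)) * Real.cos (ω * t) + (0:ℝ) * Real.sin (ω * t) := by
      rw [hD1, deriv_AB]; funext s; ring
    have hD3 : deriv (deriv (deriv (fun t => Real.cos (ω * t)))) = fun t => (0:ℝ) * Real.cos (ω * t) + (ω^3) * Real.sin (ω * t) := by
      rw [hD2, deriv_AB]; funext s; ring
    have hQ : (fun s => 2 * deriv (fun t => Real.cos (ω * t)) s
        + (1/2) * deriv (deriv (deriv (fun t => Real.cos (ω * t)))) s)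
        = fun s => (0:ℝ) * Real.cos (ω * s) + (ω^3/2 - 2*ω) * Real.sin (ω * s) := by
      funext s; rw [congrFun hD3 s, congrFun hD1 s]; ring
    rw [hQ, deriv_AB, deriv_AB, congrFun hD1 t, congrFun hD3 t]
    simp only []
    rw [hb2]
    ring

private lemma forward_dir (n : ℕ) (hn : 0 < n) (a b : ℝ) (ha1 : a ≠ 1) (hb : b = 1/(a-1)) :
    ExistsNontrivialInfDeformation n b →
    ∃ k : ℕ, 0 < k ∧ k ≠ n ∧ k ≠ 2*n ∧
      a = ((k:ℝ)^2 - 2*(n:ℝ)^2)/((k:ℝ)^2 - 4*(n:ℝ)^2) := by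
  rintro ⟨f, hf, hper, hnt, hode⟩
  have hn0 : (n:ℝ) ≠ 0 := Nat.cast_ne_zero.mpr hn.ne'
  have hb0 : b ≠ 0 := by rw [hb]; exact one_div_ne_zero (sub_ne_zero.mpr ha1)
  set T : ℝ := 2*π*(n:ℝ) with hT
  have hTpos : 0 < T := by rw [hT]; positivity
  -- smoothness chain
  have c0 : ContDiff ℝ (⊤:ℕ∞) f := hf.of_le (by simp)
  have c1 : ContDiff ℝ (⊤:ℕ∞) (deriv f) := (contDiff_infty_iff_deriv.mp c0).2
  have c2 : ContDiff ℝ (⊤:ℕ∞) (deriv (deriv f)) := (contDiff_infty_iff_deriv.mp c1).2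
  have c3 : ContDiff ℝ (⊤:ℕ∞) (deriv (deriv (deriv f))) := (contDiff_infty_iff_deriv.mp c2).2
  have c4 : ContDiff ℝ (⊤:ℕ∞) (deriv (deriv (deriv (deriv f)))) := (contDiff_infty_iff_deriv.mp c3).2
  have hd0 : ∀ t, HasDerivAt f (deriv f t) t := fun t => (c0.differentiable (by simp) t).hasDerivAt
  have hd1 : ∀ t, HasDerivAt (deriv f) (deriv (deriv f) t) t :=
    fun t => (c1.differentiable (by simp) t).hasDerivAt
  have hd2 : ∀ t, HasDerivAt (deriv (deriv f)) (deriv (deriv (deriv f)) t) t :=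
    fun t => (c2.differentiable (by simp) t).hasDerivAt
  have hd3 : ∀ t, HasDerivAt (deriv (deriv (deriv f))) (deriv (deriv (deriv (deriv f))) t) t :=
    fun t => (c3.differentiable (by simp) t).hasDerivAt
  have hd4 : ∀ t, HasDerivAt (deriv (deriv (deriv (deriv f))))
      (deriv (deriv (deriv (deriv (deriv f)))) t) t :=
    fun t => (c4.differentiable (by simp) t).hasDerivAt
  set Q : ℝ → ℝ := fun s => 2 * deriv f s + (1/2) * deriv (deriv (deriv f)) s with hQdef
  set Q' : ℝ → ℝ := fun s => 2 * deriv (deriv f) s + (1/2) * deriv (deriv (deriv (deriv f))) s with hQ'def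
  have hQd : ∀ t, HasDerivAt Q (Q' t) t :=
    fun t => ((hd1 t).const_mul 2).add ((hd3 t).const_mul (1/2))
  have hQ'd : ∀ t, HasDerivAt Q'
      (2 * deriv (deriv (deriv f)) t + (1/2) * deriv (deriv (deriv (deriv (deriv f)))) t) t :=
    fun t => ((hd2 t).const_mul 2).add ((hd4 t).const_mul (1/2))
  have hderivQ : deriv Q = Q' := funext fun t => (hQd t).deriv
  have hodeQ : ∀ t, HasDerivAt Q' (-2*(b+2) * Q t) t := by
    intro t
    have h := hode t
    rw [hderivQ] at h
    have hval : (2 * deriv (deriv (deriv f)) t + (1/2) * deriv (deriv (deriv (deriv (deriv f)))) t)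
        = -2*(b+2) * Q t := ((hQ'd t).deriv).symm.trans h
    exact hval ▸ hQ'd t
  -- periodicity
  have hp1 : Function.Periodic (deriv f) T := periodic_deriv'_s9 f T hper
  have hp2 : Function.Periodic (deriv (deriv f)) T := periodic_deriv'_s9 _ T hp1
  have hp3 : Function.Periodic (deriv (deriv (deriv f))) T := periodic_deriv'_s9 _ T hp2
  have hQper : Function.Periodic Q T := by
    intro t
    simp only [hQdef]
    rw [hp1 t, hp3 t]
  have hQ'per : Function.Periodic Q' T := hderivQ ▸ periodic_deriv'_s9 Q T hQper
  -- if Q vanishes identically then f is trivial, contradiction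
  have htriv0 : (∀ t, Q t = 0) → False := by
    intro hq0
    apply hnt
    have h34 : ∀ t, deriv (deriv (deriv f)) t = -(2^2) * deriv f t := by
      intro t
      have h := hq0 t
      simp only [hQdef] at h
      linarith
    have hv : ∀ t, HasDerivAt (deriv (deriv f)) (-((2:ℝ)^2) * deriv f t) t :=
      fun t => (h34 t) ▸ hd2 t
    have hu := harmonic_unique (by norm_num : (2:ℝ) ≠ 0) (deriv f) (deriv (deriv f)) hd1 hv
    apply trivial_of_deriv_form f 0 0 (deriv f 0) (deriv (deriv f) 0 / 2)
    intro t
    have h := hd0 t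
    rw [hu t] at h
    convert h using 1
    ring
  rcases lt_trichotomy (2*(b+2)) 0 with hL | hL | hL
  · -- exponential case : impossible
    exfalso
    set ν : ℝ := Real.sqrt (-(2*(b+2))) with hν
    have hνpos : 0 < ν := Real.sqrt_pos.mpr (by linarith)
    have hν2 : ν^2 = -(2*(b+2)) := Real.sq_sqrt (by linarith)
    have hGd : ∀ t, HasDerivAt (fun s => Q' s + ν * Q s) (ν * (Q' t + ν * Q t)) t := by
      intro t
      have h := (hodeQ t).add ((hQd t).const_mul ν)
      refine h.congr_deriv (Eq.symm ?_)
      linear_combination (Q t) * hν2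
    have hG := exp_unique (fun s => Q' s + ν * Q s) hGd
    have hexp1 : 1 < Real.exp (ν*T) := by
      rw [← Real.exp_zero]
      exact Real.exp_lt_exp.mpr (by positivity)
    have hG0 : Q' 0 + ν * Q 0 = 0 := by
      have h1 := hG T
      have h2 : Q' (0+T) + ν * Q (0+T) = Q' 0 + ν * Q 0 := by rw [hQper 0, hQ'per 0]
      rw [zero_add] at h2
      rw [h2] at h1
      have hz : (Q' 0 + ν * Q 0) * (Real.exp (ν*T) - 1) = 0 := by linear_combination -h1
      rcases mul_eq_zero.mp hz with h | h
      · exact h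
      · exfalso; linarith
    have hQ't : ∀ t, Q' t = -ν * Q t := by
      intro t
      have h := hG t
      rw [hG0] at h
      simp only [zero_mul] at h
      linarith
    have hQd2 : ∀ t, HasDerivAt Q (-ν * Q t) t := fun t => (hQ't t) ▸ hQd t
    have hQe := exp_unique Q hQd2
    have hexp2 : Real.exp (-ν*T) < 1 := by
      rw [← Real.exp_zero]
      apply Real.exp_lt_exp.mpr
      nlinarith
    have hQ0 : Q 0 = 0 := by
      have h1 := hQe T
      have h2 := hQper 0
      rw [zero_add] at h2
      rw [h2] at h1
      have hz : Q 0 * (Real.exp (-ν*T) - 1) = 0 := by linear_combination -h1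
      rcases mul_eq_zero.mp hz with h | h
      · exact h
      · exfalso; linarith
    exact htriv0 (fun t => by rw [hQe t, hQ0, zero_mul])
  · -- linear case : impossible
    exfalso
    have hb2' : b + 2 = 0 := by linarith
    have hQ'c : ∀ t, HasDerivAt Q' 0 t := by
      intro t
      have h0 : -2*(b+2) * Q t = 0 := by rw [hb2']; ring
      exact h0 ▸ hodeQ t
    have hQ'0 : ∀ t, Q' t = Q' 0 := fun t => eq_of_hasDerivAt_zero hQ'c t
    have hQlin : ∀ t, HasDerivAt (fun s => Q s - Q' 0 * s) 0 t := by
      intro t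
      have h := (hQd t).sub ((hasDerivAt_id t).const_mul (Q' 0))
      refine h.congr_deriv (Eq.symm ?_)
      rw [hQ'0 t]
      ring
    have hQeq : ∀ t, Q t - Q' 0 * t = Q 0 := by
      intro t
      have h := eq_of_hasDerivAt_zero hQlin t
      simpa using h
    have hQ'00 : Q' 0 = 0 := by
      have h1 := hQeq T
      have h2 := hQper 0
      rw [zero_add] at h2
      rw [h2] at h1
      have : Q' 0 * T = 0 := by linarith
      rcases mul_eq_zero.mp this with h | h
      · exact h
      · exact absurd h hTpos.ne'
    have hQconst : ∀ t, Q t = Q 0 := by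
      intro t
      have h := hQeq t
      rw [hQ'00] at h
      linarith
    have hF2 : ∀ t, HasDerivAt (fun s => 2 * f s + (1/2) * deriv (deriv f) s - Q 0 * s) 0 t := by
      intro t
      have h := (((hd0 t).const_mul 2).add ((hd2 t).const_mul (1/2))).sub
        ((hasDerivAt_id t).const_mul (Q 0))
      refine h.congr_deriv (Eq.symm ?_)
      have h2 := hQconst t
      simp only [hQdef] at h2
      simp only [hQdef]
      linarith
    have hF2eq := eq_of_hasDerivAt_zero hF2 T
    have hfT : f T = f 0 := by have h := hper 0; rwa [zero_add] at h
    have hd2T : deriv (deriv f) T = deriv (deriv f) 0 := by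
      have h := hp2 0; rwa [zero_add] at h
    rw [hfT, hd2T] at hF2eq
    have hQ00 : Q 0 = 0 := by
      have : Q 0 * T = 0 := by linear_combination -hF2eq
      rcases mul_eq_zero.mp this with h | h
      · exact h
      · exact absurd h hTpos.ne'
    exact htriv0 (fun t => by rw [hQconst t, hQ00])
  · -- oscillatory case
    set ω : ℝ := Real.sqrt (2*(b+2)) with hω
    have hωpos : 0 < ω := Real.sqrt_pos.mpr hL
    have hω2 : ω^2 = 2*(b+2) := Real.sq_sqrt hL.le
    have hcoef : -2*(b+2) = -(ω^2) := by rw [hω2]; ring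
    have hvQ : ∀ t, HasDerivAt Q' (-(ω^2) * Q t) t := by
      intro t
      have h := hodeQ t
      rw [hcoef] at h
      exact h
    have hQform := harmonic_unique hωpos.ne' Q Q' hQd hvQ
    set A : ℝ := Q 0 with hA
    set B : ℝ := Q' 0 / ω with hB
    by_cases hAB : A = 0 ∧ B = 0
    · exfalso
      apply htriv0
      intro t
      rw [hQform t, hAB.1, hAB.2]
      ring
    · have hE1 : A * Real.cos (ω*T) + B * Real.sin (ω*T) = A := by
        have h1 := hQform T
        have h2 := hQper 0
        rw [zero_add] at h2
        have h0 := hQform 0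
        simp only [mul_zero, Real.cos_zero, Real.sin_zero, mul_one] at h0
        rw [h2, h0] at h1
        linarith
      have hE2 : -A * Real.sin (ω*T) + B * Real.cos (ω*T) = B := by
        have harg1 : ω * (π/(2*ω)) = π/2 := by field_simp
        have h1 := hQform (π/(2*ω) + T)
        have h2 := hQper (π/(2*ω))
        have h3 := hQform (π/(2*ω))
        have harg2 : ω*(π/(2*ω)+T) = π/2 + ω*T := by rw [mul_add, harg1]
        rw [harg2, Real.cos_add, Real.sin_add, Real.cos_pi_div_two, Real.sin_pi_div_two] at h1
        rw [harg1, Real.cos_pi_div_two, Real.sin_pi_div_two] at h3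
        rw [h2, h3] at h1
        linear_combination -h1
      have hAzero : A * ((Real.cos (ω*T) - 1)^2 + (Real.sin (ω*T))^2) = 0 := by
        linear_combination (Real.cos (ω*T) - 1) * hE1 - Real.sin (ω*T) * hE2
      have hBzero : B * ((Real.cos (ω*T) - 1)^2 + (Real.sin (ω*T))^2) = 0 := by
        linear_combination Real.sin (ω*T) * hE1 + (Real.cos (ω*T) - 1) * hE2
      have hcs : (Real.cos (ω*T) - 1)^2 + (Real.sin (ω*T))^2 = 0 := by
        rcases not_and_or.mp hAB with h | h
        · rcases mul_eq_zero.mp hAzero with h' | h'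
          · exact absurd h' h
          · exact h'
        · rcases mul_eq_zero.mp hBzero with h' | h'
          · exact absurd h' h
          · exact h'
      have hcos1 : Real.cos (ω*T) = 1 := by
        nlinarith [sq_nonneg (Real.cos (ω*T) - 1), sq_nonneg (Real.sin (ω*T))]
      obtain ⟨m, hm⟩ := (Real.cos_eq_one_iff (ω*T)).mp hcos1
      have hmpos : 0 < m := by
        have h1 : 0 < ω*T := mul_pos hωpos hTpos
        by_contra hcon
        push_neg at hcon
        have : (m:ℝ) ≤ 0 := by exact_mod_cast hcon
        nlinarith [Real.pi_pos]
      set k : ℕ := m.toNat with hkdef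
      have hkm : (k:ℝ) = (m:ℝ) := by
        rw [hkdef]
        exact_mod_cast Int.toNat_of_nonneg hmpos.le
      have hkpos : 0 < k := by
        have : (0:ℝ) < (k:ℝ) := by rw [hkm]; exact_mod_cast hmpos
        exact_mod_cast this
      have hωk : ω = (k:ℝ)/(n:ℝ) := by
        have h2 : ω * (n:ℝ) * (2*π) = (m:ℝ)*(2*π) := by linear_combination -hm - ω*hT
        have h3 : ω * (n:ℝ) = (m:ℝ) := by
          have hpi : (2*π:ℝ) ≠ 0 := by positivity
          exact mul_right_cancel₀ hpi h2
        rw [hkm, eq_div_iff hn0]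
        exact h3
      have hbk : b = ((k:ℝ)^2 - 4*(n:ℝ)^2)/(2*(n:ℝ)^2) := by
        have h := hω2
        rw [hωk] at h
        field_simp at h
        field_simp
        linarith
      have hk2n : k ≠ 2*n := by
        intro h
        apply hb0
        rw [hbk, h]
        push_cast
        rw [div_eq_zero_iff]
        left
        ring
      have hkn : k ≠ n := by
        intro hkeq
        apply hnt
        have hω1 : ω = 1 := by rw [hωk, hkeq]; field_simp
        have hQform1 : ∀ t, Q t = A * Real.cos t + B * Real.sin t := by
          intro t
          have h := hQform t
          rw [hω1, one_mul] at h
          exact h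
        have h31 : ∀ t, deriv (deriv (deriv f)) t = 2 * Q t - 4 * deriv f t := by
          intro t
          simp only [hQdef]
          ring
        have hWd : ∀ t, HasDerivAt (fun s => deriv f s - (2/3)*(A * Real.cos s + B * Real.sin s))
            (deriv (deriv f) t - (2/3)*(-A * Real.sin t + B * Real.cos t)) t := by
          intro t
          have h := (hd1 t).sub ((((Real.hasDerivAt_cos t).const_mul A).add
            ((Real.hasDerivAt_sin t).const_mul B)).const_mul (2/3))
          refine h.congr_deriv (Eq.symm ?_)
          ring
        have hW'd : ∀ t, HasDerivAt (fun s => deriv (deriv f) s - (2/3)*(-A * Real.sin s + B * Real.cos s))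
            (-((2:ℝ)^2) * (deriv f t - (2/3)*(A * Real.cos t + B * Real.sin t))) t := by
          intro t
          have h := (hd2 t).sub ((((Real.hasDerivAt_sin t).const_mul (-A)).add
            ((Real.hasDerivAt_cos t).const_mul B)).const_mul (2/3))
          refine h.congr_deriv (Eq.symm ?_)
          have h1 := h31 t
          have h2 := hQform1 t
          linear_combination -h1 - 2*h2
        have hW := harmonic_unique (by norm_num : (2:ℝ) ≠ 0)
          (fun s => deriv f s - (2/3)*(A * Real.cos s + B * Real.sin s))
          (fun s => deriv (deriv f) s - (2/3)*(-A * Real.sin s + B * Real.cos s)) hWd hW'd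
        apply trivial_of_deriv_form f ((2/3)*A) ((2/3)*B)
          (deriv f 0 - (2/3)*A) ((deriv (deriv f) 0 - (2/3)*B)/2)
        intro t
        have h := hd0 t
        have hWt := hW t
        simp only [Real.cos_zero, Real.sin_zero, mul_zero, mul_one, zero_mul] at hWt
        have hval : deriv f t = (2/3)*A * Real.cos t + (2/3)*B * Real.sin t
            + (deriv f 0 - (2/3)*A) * Real.cos (2*t)
            + ((deriv (deriv f) 0 - (2/3)*B)/2) * Real.sin (2*t) := by
          linear_combination hWt
        rw [hval] at h
        exact h
      refine ⟨k, hkpos, hkn, hk2n, ?_⟩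
      have hden : (k:ℝ)^2 - 4*(n:ℝ)^2 ≠ 0 := by
        intro h
        apply hb0
        rw [hbk, h, zero_div]
      have ha : a = 1 + 1/b := by rw [hb, one_div_one_div]; ring
      rw [ha, hbk, one_div_div]
      rw [one_add_div hden]
      ring

/-- The `n`-fold unit circle admits a non-trivial infinitesimal deformation in
the class of critical curves of `ℬ_a` if and only if `a = (k²−2n²)/(k²−4n²)`
for some positive integer `k ≠ n` (necessarily `k ≠ 2n`); in particular for
`a = 1/3` the `n`-fold circle is infinitesimally rigid. -/
theorem infinitesimal_deformation_iff (n : ℕ) (hn : 0 < n)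
    (a : ℝ) (ha0 : a ≠ 0) (ha1 : a ≠ 1) (b : ℝ) (hb : b = 1 / (a - 1)) :
    (ExistsNontrivialInfDeformation n b ↔
      ∃ k : ℕ, 0 < k ∧ k ≠ n ∧ k ≠ 2 * n ∧
        a = ((k : ℝ)^2 - 2 * (n : ℝ)^2) / ((k : ℝ)^2 - 4 * (n : ℝ)^2)) ∧
    (a = 1/3 → ¬ ExistsNontrivialInfDeformation n b) := by
  have hiff : ExistsNontrivialInfDeformation n b ↔
      ∃ k : ℕ, 0 < k ∧ k ≠ n ∧ k ≠ 2 * n ∧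
        a = ((k : ℝ)^2 - 2 * (n : ℝ)^2) / ((k : ℝ)^2 - 4 * (n : ℝ)^2) := by
    constructor
    · intro h
      exact forward_dir n hn a b ha1 hb h
    · rintro ⟨k, hk, hkn, hk2n, hak⟩
      exact reverse_dir n hn a b hb k hk hkn hk2n hak
  refine ⟨hiff, ?_⟩
  intro ha13 hex
  obtain ⟨k, hk, hkn, hk2n, hak⟩ := hiff.mp hex
  have hn0 : (n:ℝ) ≠ 0 := Nat.cast_ne_zero.mpr hn.ne'
  have hden : (k:ℝ)^2 - 4*(n:ℝ)^2 ≠ 0 := by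
    intro h
    have h2 : ((k:ℝ) - 2*n) * ((k:ℝ) + 2*n) = 0 := by linear_combination h
    have hpos : (0:ℝ) < (k:ℝ) + 2*n := by positivity
    rcases mul_eq_zero.mp h2 with h3 | h3
    · apply hk2n
      have : (k:ℝ) = 2*(n:ℝ) := by linarith
      exact_mod_cast this
    · linarith
  rw [ha13] at hak
  have h1 : 1 * ((k:ℝ)^2 - 4*(n:ℝ)^2) = ((k:ℝ)^2 - 2*(n:ℝ)^2) * 3 :=
    (div_eq_div_iff (by norm_num) hden).mp hak
  have h2 : ((k:ℝ) - n) * ((k:ℝ) + n) = 0 := by linear_combination (-1/2) * h1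
  have hnpos : (0:ℝ) < (n:ℝ) := by exact_mod_cast hn
  rcases mul_eq_zero.mp h2 with h3 | h3
  · apply hkn
    have : (k:ℝ) = (n:ℝ) := by linarith
    exact_mod_cast this
  · have : (0:ℝ) ≤ (k:ℝ) := Nat.cast_nonneg k
    linarith
end

section
/- Let a ∈ ℝ. Let γ₀(t) = (cos t, sin t) be the unit circle, let f: ℝ → ℝ be smooth and 2π-periodic, set γ₁ := −(f'/2)·γ₀ + f·γ₀', and let γ₂: ℝ → ℝ² be any smooth 2π-periodic curve satisfying the second-order parameterization constraint [γ₀, γ₂'] + [γ₁, γ₁'] + [γ₂, γ₀'] = 0 pointwise. Define q := [γ₀', γ₁''] + [γ₁', γ₀''] and r := [γ₀', γ₂''] + [γ₁', γ₁''] + [γ₂', γ₀'']. Then ∫₀^{2π} ( r + ((a−1)/2)·q² ) dt = ∫₀^{2π} ( (2a−1) f'² − ((4a−3)/4) f''² + ((a−1)/8) f'''² ) dt. In particular, for a = 1/3 this equals −(1/12)∫₀^{2π}(4f'² − 5f''² + f'''²) dt. -/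
open Real

open scoped ContDiff

private lemma periodic_deriv_my {E : Type*} [NormedAddCommGroup E] [NormedSpace ℝ E]
    {F : ℝ → E} {c : ℝ} (h : Function.Periodic F c) : Function.Periodic (deriv F) c := by
  intro t
  have h2 : (fun s => F (s + c)) = F := funext fun s => h s
  calc deriv F (t + c) = deriv (fun s => F (s + c)) t := (deriv_comp_add_const F c t).symm
    _ = deriv F t := by rw [h2]

/-- The second variation of `ℬ_a` at the unit circle: for a second-order
deformation `Γ = γ₀ + εγ₁ + ε²γ₂` of the unit circle preserving the
centroaffine parameterization modulo `ε³`, with `γ₁ = −(f'/2)γ₀ + fγ₀'`, the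
Hessian integral `∫ (r + ((a−1)/2)q²) dt` equals
`∫ ((2a−1)f'² − ((4a−3)/4)f''² + ((a−1)/8)f'''²) dt`; for `a = 1/3` this is
`−(1/12)∫(4f'² − 5f''² + f'''²) dt`. -/
theorem second_variation_formula (a : ℝ)
    (γ₀ : ℝ → ℝ × ℝ) (hγ₀ : γ₀ = fun t => (Real.cos t, Real.sin t))
    (f : ℝ → ℝ) (hf : ContDiff ℝ (⊤ : ℕ∞) f) (hfper : Function.Periodic f (2 * π))
    (γ₁ : ℝ → ℝ × ℝ)
    (hγ₁ : γ₁ = fun t => (-(deriv f t) / 2) • γ₀ t + f t • deriv γ₀ t)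
    (γ₂ : ℝ → ℝ × ℝ) (hγ₂ : ContDiff ℝ (⊤ : ℕ∞) γ₂) (hγ₂per : Function.Periodic γ₂ (2 * π))
    (hconstraint : ∀ t,
      br (γ₀ t) (deriv γ₂ t) + br (γ₁ t) (deriv γ₁ t) + br (γ₂ t) (deriv γ₀ t) = 0)
    (q : ℝ → ℝ)
    (hq : q = fun t => br (deriv γ₀ t) (deriv (deriv γ₁) t) + br (deriv γ₁ t) (deriv (deriv γ₀) t))
    (r : ℝ → ℝ)
    (hr : r = fun t => br (deriv γ₀ t) (deriv (deriv γ₂) t) +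
      br (deriv γ₁ t) (deriv (deriv γ₁) t) + br (deriv γ₂ t) (deriv (deriv γ₀) t)) :
    (∫ t in (0:ℝ)..(2 * π), (r t + (a - 1) / 2 * (q t)^2)) =
      (∫ t in (0:ℝ)..(2 * π),
        ((2 * a - 1) * (deriv f t)^2 - (4 * a - 3) / 4 * (deriv (deriv f) t)^2 +
          (a - 1) / 8 * (deriv (deriv (deriv f)) t)^2)) ∧
    (a = 1/3 →
      (∫ t in (0:ℝ)..(2 * π), (r t + (a - 1) / 2 * (q t)^2)) =
        -(1/12) * ∫ t in (0:ℝ)..(2 * π),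
          (4 * (deriv f t)^2 - 5 * (deriv (deriv f) t)^2 + (deriv (deriv (deriv f)) t)^2)) := by
  -- abbreviations for derivatives of f
  set f1 := deriv f with hf1def
  set f2 := deriv f1 with hf2def
  set f3 := deriv f2 with hf3def
  -- smoothness
  have hfi : ContDiff ℝ ∞ f := hf.of_le (by simp)
  have hf1s : ContDiff ℝ ∞ f1 := (contDiff_infty_iff_deriv.mp hfi).2
  have hf2s : ContDiff ℝ ∞ f2 := (contDiff_infty_iff_deriv.mp hf1s).2
  have hf3s : ContDiff ℝ ∞ f3 := (contDiff_infty_iff_deriv.mp hf2s).2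
  have h1i : (1 : WithTop ℕ∞) ≤ ∞ := by exact_mod_cast le_top
  have hd0 : ∀ t, HasDerivAt f (f1 t) t := fun t => (hfi.differentiable (by simp) t).hasDerivAt
  have hd1 : ∀ t, HasDerivAt f1 (f2 t) t := fun t => (hf1s.differentiable (by simp) t).hasDerivAt
  have hd2 : ∀ t, HasDerivAt f2 (f3 t) t := fun t => (hf2s.differentiable (by simp) t).hasDerivAt
  -- γ₀ derivatives
  have hg0d : ∀ t, HasDerivAt γ₀ (-sin t, cos t) t := by
    intro t; rw [hγ₀]; exact (hasDerivAt_cos t).prodMk (hasDerivAt_sin t)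
  have dγ₀ : deriv γ₀ = fun t => (-sin t, cos t) := funext fun t => (hg0d t).deriv
  have hg0dd : ∀ t, HasDerivAt (deriv γ₀) (-cos t, -sin t) t := by
    intro t; rw [dγ₀]; exact (hasDerivAt_sin t).neg.prodMk (hasDerivAt_cos t)
  have ddγ₀ : deriv (deriv γ₀) = fun t => (-cos t, -sin t) := funext fun t => (hg0dd t).deriv
  -- γ₁ closed form
  have hγ₁' : γ₁ = fun t =>
      (-f1 t / 2 * cos t + f t * -sin t, -f1 t / 2 * sin t + f t * cos t) := by
    funext t
    simp only [hγ₁]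
    rw [dγ₀, hγ₀]
    simp only [Prod.smul_mk, smul_eq_mul, Prod.mk_add_mk, Prod.mk.injEq]
  -- γ₁ first derivative
  have hg1d : ∀ t, HasDerivAt γ₁
      (-(f2 t / 2 + f t) * cos t - f1 t / 2 * sin t,
       -(f2 t / 2 + f t) * sin t + f1 t / 2 * cos t) t := by
    intro t
    rw [hγ₁']
    have hA : HasDerivAt (fun s => -f1 s / 2 * cos s + f s * -sin s)
        (-(f2 t / 2 + f t) * cos t - f1 t / 2 * sin t) t := by
      have h := (((hd1 t).neg.div_const 2).mul (hasDerivAt_cos t)).add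
        ((hd0 t).mul (hasDerivAt_sin t).neg)
      exact h.congr_deriv (by simp only [Pi.neg_apply, Pi.add_apply]; ring)
    have hB : HasDerivAt (fun s => -f1 s / 2 * sin s + f s * cos s)
        (-(f2 t / 2 + f t) * sin t + f1 t / 2 * cos t) t := by
      have h := (((hd1 t).neg.div_const 2).mul (hasDerivAt_sin t)).add
        ((hd0 t).mul (hasDerivAt_cos t))
      exact h.congr_deriv (by simp only [Pi.neg_apply, Pi.add_apply]; ring)
    exact hA.prodMk hB
  have dγ₁ : deriv γ₁ = fun t =>
      (-(f2 t / 2 + f t) * cos t - f1 t / 2 * sin t,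
       -(f2 t / 2 + f t) * sin t + f1 t / 2 * cos t) := funext fun t => (hg1d t).deriv
  -- γ₁ second derivative
  have hg1dd : ∀ t, HasDerivAt (deriv γ₁)
      (-(f3 t / 2 + 3 * f1 t / 2) * cos t + f t * sin t,
       -(f3 t / 2 + 3 * f1 t / 2) * sin t - f t * cos t) t := by
    intro t
    rw [dγ₁]
    have hA : HasDerivAt (fun s => -(f2 s / 2 + f s) * cos s - f1 s / 2 * sin s)
        (-(f3 t / 2 + 3 * f1 t / 2) * cos t + f t * sin t) t := by
      have h := ((((hd2 t).div_const 2).add (hd0 t)).neg.mul (hasDerivAt_cos t)).sub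
        (((hd1 t).div_const 2).mul (hasDerivAt_sin t))
      exact h.congr_deriv (by simp only [Pi.neg_apply, Pi.add_apply]; ring)
    have hB : HasDerivAt (fun s => -(f2 s / 2 + f s) * sin s + f1 s / 2 * cos s)
        (-(f3 t / 2 + 3 * f1 t / 2) * sin t - f t * cos t) t := by
      have h := ((((hd2 t).div_const 2).add (hd0 t)).neg.mul (hasDerivAt_sin t)).add
        (((hd1 t).div_const 2).mul (hasDerivAt_cos t))
      exact h.congr_deriv (by simp only [Pi.neg_apply, Pi.add_apply]; ring)
    exact hA.prodMk hB
  have ddγ₁ : deriv (deriv γ₁) = fun t =>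
      (-(f3 t / 2 + 3 * f1 t / 2) * cos t + f t * sin t,
       -(f3 t / 2 + 3 * f1 t / 2) * sin t - f t * cos t) := funext fun t => (hg1dd t).deriv
  -- γ₂ derivatives
  have hγ₂i : ContDiff ℝ ∞ γ₂ := hγ₂.of_le (by simp)
  have hγ₂d : ContDiff ℝ ∞ (deriv γ₂) := (contDiff_infty_iff_deriv.mp hγ₂i).2
  have hγ₂dd : ContDiff ℝ ∞ (deriv (deriv γ₂)) := (contDiff_infty_iff_deriv.mp hγ₂d).2
  have hg2d : ∀ t, HasDerivAt γ₂ (deriv γ₂ t) t :=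
    fun t => (hγ₂i.differentiable (by simp) t).hasDerivAt
  have hg2dd : ∀ t, HasDerivAt (deriv γ₂) (deriv (deriv γ₂) t) t :=
    fun t => (hγ₂d.differentiable (by simp) t).hasDerivAt
  have hxd : ∀ t, HasDerivAt (fun s => (γ₂ s).1) (deriv γ₂ t).1 t := fun t =>
    (ContinuousLinearMap.fst ℝ ℝ ℝ).hasFDerivAt.comp_hasDerivAt t (hg2d t)
  have hyd : ∀ t, HasDerivAt (fun s => (γ₂ s).2) (deriv γ₂ t).2 t := fun t =>
    (ContinuousLinearMap.snd ℝ ℝ ℝ).hasFDerivAt.comp_hasDerivAt t (hg2d t)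
  have hX1d : ∀ t, HasDerivAt (fun s => (deriv γ₂ s).1) (deriv (deriv γ₂) t).1 t := fun t =>
    (ContinuousLinearMap.fst ℝ ℝ ℝ).hasFDerivAt.comp_hasDerivAt t (hg2dd t)
  have hY1d : ∀ t, HasDerivAt (fun s => (deriv γ₂ s).2) (deriv (deriv γ₂) t).2 t := fun t =>
    (ContinuousLinearMap.snd ℝ ℝ ℝ).hasFDerivAt.comp_hasDerivAt t (hg2dd t)
  -- pointwise formula for q
  have hqt : ∀ t, q t = f3 t / 2 + 2 * f1 t := by
    intro t
    simp only [hq]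
    rw [ddγ₁, ddγ₀, dγ₁, dγ₀]
    simp only [br]
    linear_combination (f3 t / 2 + 2 * f1 t) * sin_sq_add_cos_sq t
  -- pointwise formula for r
  have hrt : ∀ t, r t =
      -sin t * (deriv (deriv γ₂) t).2 - cos t * (deriv (deriv γ₂) t).1 +
        (cos t * (deriv γ₂ t).2 - sin t * (deriv γ₂ t).1) +
        (f t * f2 t / 2 + f t ^ 2 + f1 t * f3 t / 4 + 3 * f1 t ^ 2 / 4) := by
    intro t
    simp only [hr]
    rw [ddγ₁, ddγ₀, dγ₁, dγ₀]
    simp only [br]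
    linear_combination
      (f t * f2 t / 2 + f t ^ 2 + f1 t * f3 t / 4 + 3 * f1 t ^ 2 / 4) * sin_sq_add_cos_sq t
  -- constraint in components
  have hconC : ∀ t, cos t * (deriv γ₂ t).2 - sin t * (deriv γ₂ t).1 +
      ((γ₂ t).1 * cos t + (γ₂ t).2 * sin t) +
      (-(f1 t) ^ 2 / 4 + f t * f2 t / 2 + f t ^ 2) = 0 := by
    intro t
    have h := hconstraint t
    rw [dγ₁, dγ₀] at h
    rw [hγ₁', hγ₀] at h
    simp only [br] at h
    linear_combination h -
      (-(f1 t) ^ 2 / 4 + f t * f2 t / 2 + f t ^ 2) * sin_sq_add_cos_sq t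
  -- the potential function G whose derivative is the difference of integrands
  have hG : ∀ t, HasDerivAt
      (fun s => -((deriv γ₂ s).1 * cos s + (γ₂ s).1 * sin s) -
        ((deriv γ₂ s).2 * sin s - (γ₂ s).2 * cos s) + (4 * a - 3) / 4 * (f1 s * f2 s))
      (r t + (a - 1) / 2 * (q t) ^ 2 -
        ((2 * a - 1) * (f1 t) ^ 2 - (4 * a - 3) / 4 * (f2 t) ^ 2 +
          (a - 1) / 8 * (f3 t) ^ 2)) t := by
    intro t
    have h1 := ((hX1d t).mul (hasDerivAt_cos t)).add ((hxd t).mul (hasDerivAt_sin t))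
    have h2 := ((hY1d t).mul (hasDerivAt_sin t)).sub ((hyd t).mul (hasDerivAt_cos t))
    have h3 := ((hd1 t).mul (hd2 t)).const_mul ((4 * a - 3) / 4)
    have h := (h1.neg.sub h2).add h3
    refine h.congr_deriv (Eq.symm ?_)
    rw [hrt t, hqt t]
    linear_combination hconC t
  -- continuity facts
  have hc1 : Continuous f1 := hf1s.continuous
  have hc2 : Continuous f2 := hf2s.continuous
  have hc3 : Continuous f3 := hf3s.continuous
  have hcx : Continuous fun t => (γ₂ t).1 := continuous_fst.comp hγ₂i.continuous
  have hcy : Continuous fun t => (γ₂ t).2 := continuous_snd.comp hγ₂i.continuous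
  have hcX1 : Continuous fun t => (deriv γ₂ t).1 := continuous_fst.comp hγ₂d.continuous
  have hcY1 : Continuous fun t => (deriv γ₂ t).2 := continuous_snd.comp hγ₂d.continuous
  have hcX2 : Continuous fun t => (deriv (deriv γ₂) t).1 := continuous_fst.comp hγ₂dd.continuous
  have hcY2 : Continuous fun t => (deriv (deriv γ₂) t).2 := continuous_snd.comp hγ₂dd.continuous
  have hcL : Continuous fun t => r t + (a - 1) / 2 * (q t) ^ 2 := by
    have e : (fun t => r t + (a - 1) / 2 * (q t) ^ 2) = fun t =>
        (-sin t * (deriv (deriv γ₂) t).2 - cos t * (deriv (deriv γ₂) t).1 +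
          (cos t * (deriv γ₂ t).2 - sin t * (deriv γ₂ t).1) +
          (f t * f2 t / 2 + f t ^ 2 + f1 t * f3 t / 4 + 3 * f1 t ^ 2 / 4)) +
        (a - 1) / 2 * (f3 t / 2 + 2 * f1 t) ^ 2 :=
      funext fun t => by rw [hrt t, hqt t]
    rw [e]
    have hcf : Continuous f := hfi.continuous
    fun_prop
  have hcR : Continuous fun t => (2 * a - 1) * (f1 t) ^ 2 - (4 * a - 3) / 4 * (f2 t) ^ 2 +
      (a - 1) / 8 * (f3 t) ^ 2 := by fun_prop
  have hLi : IntervalIntegrable (fun t => r t + (a - 1) / 2 * (q t) ^ 2)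
      MeasureTheory.volume 0 (2 * π) := hcL.intervalIntegrable _ _
  have hRi : IntervalIntegrable (fun t => (2 * a - 1) * (f1 t) ^ 2 -
      (4 * a - 3) / 4 * (f2 t) ^ 2 + (a - 1) / 8 * (f3 t) ^ 2)
      MeasureTheory.volume 0 (2 * π) := hcR.intervalIntegrable _ _
  -- the fundamental theorem of calculus
  have key : (∫ t in (0:ℝ)..(2 * π), (r t + (a - 1) / 2 * (q t) ^ 2 -
        ((2 * a - 1) * (f1 t) ^ 2 - (4 * a - 3) / 4 * (f2 t) ^ 2 +
          (a - 1) / 8 * (f3 t) ^ 2))) =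
      (fun s => -((deriv γ₂ s).1 * cos s + (γ₂ s).1 * sin s) -
        ((deriv γ₂ s).2 * sin s - (γ₂ s).2 * cos s) + (4 * a - 3) / 4 * (f1 s * f2 s)) (2 * π) -
      (fun s => -((deriv γ₂ s).1 * cos s + (γ₂ s).1 * sin s) -
        ((deriv γ₂ s).2 * sin s - (γ₂ s).2 * cos s) + (4 * a - 3) / 4 * (f1 s * f2 s)) 0 := by
    apply intervalIntegral.integral_eq_sub_of_hasDerivAt (fun t _ => hG t)
    exact (hLi.sub hRi)
  -- periodicity kills the boundary term
  have e1 : γ₂ (2 * π) = γ₂ 0 := by simpa using hγ₂per 0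
  have e2 : deriv γ₂ (2 * π) = deriv γ₂ 0 := by simpa using (periodic_deriv_my hγ₂per) 0
  have e3 : f1 (2 * π) = f1 0 := by simpa using (periodic_deriv_my hfper) 0
  have e4 : f2 (2 * π) = f2 0 := by simpa using (periodic_deriv_my (periodic_deriv_my hfper)) 0
  have hbdry : (∫ t in (0:ℝ)..(2 * π), (r t + (a - 1) / 2 * (q t) ^ 2 -
        ((2 * a - 1) * (f1 t) ^ 2 - (4 * a - 3) / 4 * (f2 t) ^ 2 +
          (a - 1) / 8 * (f3 t) ^ 2))) = 0 := by
    rw [key]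
    simp only [e1, e2, e3, e4, Real.cos_two_pi, Real.sin_two_pi, Real.cos_zero, Real.sin_zero]
    ring
  have hsub := intervalIntegral.integral_sub hLi hRi
  have hmain : (∫ t in (0:ℝ)..(2 * π), (r t + (a - 1) / 2 * (q t) ^ 2)) =
      ∫ t in (0:ℝ)..(2 * π), ((2 * a - 1) * (f1 t) ^ 2 - (4 * a - 3) / 4 * (f2 t) ^ 2 +
        (a - 1) / 8 * (f3 t) ^ 2) := by
    have := hbdry
    rw [hsub] at this
    linarith
  refine ⟨hmain, fun ha => ?_⟩
  subst ha
  rw [hmain]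
  have e : (∫ t in (0:ℝ)..(2 * π), ((2 * (1/3:ℝ) - 1) * (f1 t) ^ 2 -
      (4 * (1/3:ℝ) - 3) / 4 * (f2 t) ^ 2 + ((1/3:ℝ) - 1) / 8 * (f3 t) ^ 2)) =
      ∫ t in (0:ℝ)..(2 * π), (-(1/12:ℝ) * (4 * (f1 t) ^ 2 - 5 * (f2 t) ^ 2 + (f3 t) ^ 2)) := by
    apply intervalIntegral.integral_congr
    intro t _
    ring
  rw [e, intervalIntegral.integral_const_mul]
end

section
/- Let a < 1/3. Then for every smooth 2π-periodic function f: ℝ → ℝ, Q_a(f) := ∫₀^{2π} ( (2a−1) f'(t)² − ((4a−3)/4) f''(t)² + ((a−1)/8) f'''(t)² ) dt ≤ 0, and Q_a(f) = 0 if and only if f is a linear combination of 1, cos 2t, sin 2t. (Consequently, taking into account the overall factor a of the Hessian of ℬ_a, the circle is a local maximum of ℬ_a for 0 < a < 1/3 and a local minimum of ℬ_a for a < 0, modulo the trivial SL(2,ℝ)-deformations.) -/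
open Real Complex MeasureTheory Function Set intervalIntegral

noncomputable section

local instance fact_two_pi_pos : Fact ((0:ℝ) < 2*π) := ⟨by positivity⟩

lemma two_pi_pos' : (0:ℝ) < 2*π := by positivity

/-- interval Fourier coefficient on `[0, 2π]`. -/
def cc (u : ℝ → ℝ) (n : ℤ) : ℂ :=
  fourierCoeffOn two_pi_pos' (fun t => (u t : ℂ)) n

lemma periodic_ofReal {u : ℝ → ℝ} (hp : Periodic u (2*π)) :
    Periodic (fun t => ((u t : ℝ) : ℂ)) (2*π) := fun x => by simp [hp x]

/-- the continuous lift of a continuous periodic function to the circle -/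
def periodicLift (u : ℝ → ℝ) (hc : Continuous u) (hp : Periodic u (2*π)) :
    C(AddCircle (2*π), ℂ) :=
  ⟨(periodic_ofReal hp).lift, continuous_coinduced_dom.mpr (Complex.continuous_ofReal.comp hc)⟩

lemma periodicLift_coe (u : ℝ → ℝ) (hc : Continuous u) (hp : Periodic u (2*π)) (x : ℝ) :
    periodicLift u hc hp (x : AddCircle (2*π)) = (u x : ℂ) := rfl

lemma fourierCoeff_periodicLift (u : ℝ → ℝ) (hc : Continuous u) (hp : Periodic u (2*π)) (n : ℤ) :
    fourierCoeff (⇑(periodicLift u hc hp)) n = cc u n := by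
  rw [fourierCoeff_eq_intervalIntegral _ n 0, cc, fourierCoeffOn_eq_integral]
  rw [zero_add]
  congr 1
  · norm_num
  · apply intervalIntegral.integral_congr
    intro x _
    show (fourier (-n)) ↑x • (periodicLift u hc hp) ↑x = _
    rw [periodicLift_coe]
    congr 1
    rw [fourier_coe_apply, fourier_coe_apply]
    norm_num

lemma parseval_periodic (u : ℝ → ℝ) (hc : Continuous u) (hp : Periodic u (2*π)) :
    Summable (fun n : ℤ => ‖cc u n‖^2) ∧
      (∫ t in (0:ℝ)..(2*π), (u t)^2) = (2*π) * ∑' n : ℤ, ‖cc u n‖^2 := by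
  set U := periodicLift u hc hp with hU
  have hcoeff : ∀ n : ℤ,
      fourierCoeff (ContinuousMap.toLp (E := ℂ) 2 AddCircle.haarAddCircle ℂ U) n = cc u n := by
    intro n
    rw [fourierCoeff_toLp, fourierCoeff_periodicLift]
  have hsummable : Summable (fun n : ℤ => ‖cc u n‖^2) := by
    have h1 := (lp.memℓp (fourierBasis.repr (ContinuousMap.toLp (E := ℂ) 2 AddCircle.haarAddCircle ℂ U))).summable
      (p := (2 : ENNReal)) (by norm_num)
    have : (fun n : ℤ => ‖cc u n‖ ^ ((2:ENNReal)).toReal)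
        = fun n : ℤ => ‖cc u n‖^2 := by
      funext n
      rw [show ((2:ENNReal)).toReal = ((2:ℕ):ℝ) by norm_num, Real.rpow_natCast]
    have hrw : (fun i : ℤ => ‖(fourierBasis.repr (ContinuousMap.toLp (E := ℂ) 2 AddCircle.haarAddCircle ℂ U)) i‖ ^ ((2:ENNReal)).toReal) = fun n : ℤ => ‖cc u n‖^2 := by
      funext n
      have hb := fourierBasis_repr (ContinuousMap.toLp (E := ℂ) 2 AddCircle.haarAddCircle ℂ U) n
      rw [hb, hcoeff, show ((2:ENNReal)).toReal = ((2:ℕ):ℝ) by norm_num, Real.rpow_natCast]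
    rwa [hrw] at h1
  refine ⟨hsummable, ?_⟩
  have hpars := tsum_sq_fourierCoeff (ContinuousMap.toLp (E := ℂ) 2 AddCircle.haarAddCircle ℂ U)
  simp_rw [hcoeff] at hpars
  -- rewrite RHS of Parseval as interval integral
  have h2 : (∫ t : AddCircle (2*π), ‖(ContinuousMap.toLp (E := ℂ) 2 AddCircle.haarAddCircle ℂ U) t‖^2 ∂AddCircle.haarAddCircle)
      = ∫ t : AddCircle (2*π), ‖U t‖^2 ∂AddCircle.haarAddCircle := by
    apply MeasureTheory.integral_congr_ae
    filter_upwards [ContinuousMap.coeFn_toLp (𝕜 := ℂ) (p := 2) AddCircle.haarAddCircle U] with t ht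
    rw [ht]
  have h3 : (∫ x in (0:ℝ)..0 + 2*π, ‖U (x : AddCircle (2*π))‖^2)
      = ∫ z : AddCircle (2*π), ‖U z‖^2 := by
    exact AddCircle.intervalIntegral_preimage (2*π) 0 (fun z => ‖U z‖^2)
  have h4 : (∫ z : AddCircle (2*π), ‖U z‖^2)
      = (2*π) * ∫ z : AddCircle (2*π), ‖U z‖^2 ∂AddCircle.haarAddCircle := by
    rw [AddCircle.volume_eq_smul_haarAddCircle, MeasureTheory.integral_smul_measure _ _,
      ENNReal.toReal_ofReal two_pi_pos'.le, smul_eq_mul]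
  have h5 : (∫ x in (0:ℝ)..0 + 2*π, ‖U (x : AddCircle (2*π))‖^2)
      = ∫ t in (0:ℝ)..(2*π), (u t)^2 := by
    rw [zero_add]
    apply intervalIntegral.integral_congr
    intro x _
    show ‖U (x : AddCircle (2*π))‖^2 = _
    rw [periodicLift_coe]
    simp [Complex.norm_real, _root_.sq_abs]
  rw [← h5, h3, h4, ← h2, ← hpars]

lemma cc_eq_fourierCoeffOn (u : ℝ → ℝ) (n : ℤ) :
    cc u n = fourierCoeffOn two_pi_pos' (fun t => (u t : ℂ)) n := rfl

lemma integral_deriv_periodic (u : ℝ → ℝ) (hu : ContDiff ℝ (⊤ : ℕ∞) u) (hp : Periodic u (2*π)) :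
    (∫ t in (0:ℝ)..(2*π), deriv u t) = 0 := by
  rw [intervalIntegral.integral_deriv_eq_sub (fun x _ => (hu.differentiable (by simp)).differentiableAt)]
  · have := hp 0
    rw [zero_add] at this
    rw [this, sub_self]
  · exact ((hu.continuous_deriv (by simp)).intervalIntegrable _ _)

lemma cc_deriv (u : ℝ → ℝ) (hu : ContDiff ℝ (⊤ : ℕ∞) u) (hp : Periodic u (2*π)) (n : ℤ) :
    cc (deriv u) n = (Complex.I * n) * cc u n := by
  rcases eq_or_ne n 0 with rfl | hn
  · simp only [Int.cast_zero, mul_zero, zero_mul]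
    rw [cc, fourierCoeffOn_eq_integral]
    simp only [neg_zero, fourier_zero, one_smul, sub_zero]
    rw [intervalIntegral.integral_ofReal, integral_deriv_periodic u hu hp]
    simp
  · have hder : ∀ x ∈ Set.uIcc (0:ℝ) (2*π), HasDerivAt (fun t => ((u t : ℝ) : ℂ)) ((deriv u x : ℝ) : ℂ) x := by
      intro x _
      exact ((hu.differentiable (by simp)).differentiableAt.hasDerivAt).ofReal_comp
    have hint : IntervalIntegrable (fun t => ((deriv u t : ℝ) : ℂ)) MeasureTheory.volume 0 (2*π) :=
      (Complex.continuous_ofReal.comp (hu.continuous_deriv (by simp))).intervalIntegrable _ _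
    have hA := fourierCoeffOn_of_hasDerivAt two_pi_pos' hn hder hint
    have hu0 : ((u (2*π) : ℝ) : ℂ) - ((u 0 : ℝ) : ℂ) = 0 := by
      have := hp 0; rw [zero_add] at this; rw [this]; ring
    rw [hu0] at hA
    rw [cc_eq_fourierCoeffOn, cc_eq_fourierCoeffOn, hA]
    have hπ : (π : ℂ) ≠ 0 := Complex.ofReal_ne_zero.mpr Real.pi_ne_zero
    have hnC : (n : ℂ) ≠ 0 := Int.cast_ne_zero.mpr hn
    field_simp
    push_cast
    ring

lemma contDiff_top_deriv_s14 {u : ℝ → ℝ} (hu : ContDiff ℝ (⊤ : ℕ∞) u) : ContDiff ℝ (⊤ : ℕ∞) (deriv u) := by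
  have h : ContDiff ℝ (((⊤ : ℕ∞) : WithTop ℕ∞) + 1) u := by
    rw [show (((⊤ : ℕ∞) : WithTop ℕ∞) + 1) = ((⊤ : ℕ∞) : WithTop ℕ∞) by rfl]; exact hu
  exact (contDiff_succ_iff_deriv.mp h).2.2

lemma periodic_deriv'_s14 {f : ℝ → ℝ} (hper : Periodic f (2*π)) : Periodic (deriv f) (2*π) := by
  intro x
  have h1 : (fun y => f (y + 2*π)) = f := funext fun y => hper y
  calc deriv f (x + 2*π) = deriv (fun y => f (y + 2*π)) x := by
        rw [deriv_comp_add_const]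
    _ = deriv f x := by rw [h1]

/-- the symbol of the quadratic form (on first-derivative coefficients) -/
lemma key_nonpos (a : ℝ) (ha : a < 1/3) (n : ℤ) :
    (2*a - 1) - (4*a - 3)/4 * (n:ℝ)^2 + (a - 1)/8 * (n:ℝ)^4 ≤ 0 := by
  have hx : ((n.natAbs : ℝ))^2 = (n:ℝ)^2 := by
    rw [Nat.cast_natAbs]; push_cast; exact _root_.sq_abs _
  rcases le_or_gt 3 n.natAbs with h3 | h3
  · have h9 : (9:ℝ) ≤ (n:ℝ)^2 := by
      rw [← hx]
      have : (3:ℝ) ≤ (n.natAbs : ℝ) := by exact_mod_cast h3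
      nlinarith
    have h1a : (0:ℝ) < 1 - a := by linarith
    nlinarith [mul_pos (show (0:ℝ) < (n:ℝ)^2 - 4 by linarith)
      (show (0:ℝ) < (1-a)*(n:ℝ)^2 + 4*a - 2 by nlinarith), sq_nonneg ((n:ℝ)^2 - 4)]
  · interval_cases h : n.natAbs <;>
      (push_cast at hx;
       rw [show ((n:ℝ))^4 = ((n:ℝ)^2)^2 by ring, ← hx]; nlinarith)

lemma key_neg (a : ℝ) (ha : a < 1/3) (n : ℤ) (hn : n.natAbs ≠ 2) :
    (2*a - 1) - (4*a - 3)/4 * (n:ℝ)^2 + (a - 1)/8 * (n:ℝ)^4 < 0 := by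
  have hx : ((n.natAbs : ℝ))^2 = (n:ℝ)^2 := by
    rw [Nat.cast_natAbs]; push_cast; exact _root_.sq_abs _
  rcases le_or_gt 3 n.natAbs with h3 | h3
  · have h9 : (9:ℝ) ≤ (n:ℝ)^2 := by
      rw [← hx]
      have : (3:ℝ) ≤ (n.natAbs : ℝ) := by exact_mod_cast h3
      nlinarith
    have h1a : (0:ℝ) < 1 - a := by linarith
    nlinarith [mul_pos (show (0:ℝ) < (n:ℝ)^2 - 4 by linarith)
      (show (0:ℝ) < (1-a)*(n:ℝ)^2 + 4*a - 2 by nlinarith), sq_nonneg ((n:ℝ)^2 - 4)]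
  · interval_cases h : n.natAbs <;> first
      | (exact absurd rfl hn)
      | (push_cast at hx;
         rw [show ((n:ℝ))^4 = ((n:ℝ)^2)^2 by ring, ← hx]; nlinarith)

lemma norm_I_mul_sq (n : ℤ) (z : ℂ) : ‖Complex.I * n * z‖^2 = (n:ℝ)^2 * ‖z‖^2 := by
  rw [norm_mul, norm_mul, Complex.norm_I, one_mul, mul_pow]
  congr 1
  rw [show ((n:ℂ)) = (((n:ℝ)):ℂ) by push_cast; ring, Complex.norm_real,
    Real.norm_eq_abs, _root_.sq_abs]

lemma trig_hasDerivAt (A B t : ℝ) :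
    HasDerivAt (fun s => A * Real.cos (2*s) + B * Real.sin (2*s))
      ((2*B) * Real.cos (2*t) + (-(2*A)) * Real.sin (2*t)) t := by
  have h2 : HasDerivAt (fun s : ℝ => 2*s) 2 t := by
    simpa using (hasDerivAt_id t).const_mul 2
  have hcos := (Real.hasDerivAt_cos (2*t)).comp t h2
  have hsin := (Real.hasDerivAt_sin (2*t)).comp t h2
  have h := (hcos.const_mul A).add (hsin.const_mul B)
  exact h.congr_deriv (by ring)

lemma trig2_deriv (A B : ℝ) :
    deriv (fun s => A * Real.cos (2*s) + B * Real.sin (2*s))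
      = fun t => (2*B) * Real.cos (2*t) + (-(2*A)) * Real.sin (2*t) := by
  funext t
  exact (trig_hasDerivAt A B t).deriv

lemma trig3_deriv (c₀ A B : ℝ) :
    deriv (fun s => c₀ + A * Real.cos (2*s) + B * Real.sin (2*s))
      = fun t => (2*B) * Real.cos (2*t) + (-(2*A)) * Real.sin (2*t) := by
  funext t
  have h := (hasDerivAt_const t c₀).add (trig_hasDerivAt A B t)
  have heq : (fun s => c₀ + A * Real.cos (2*s) + B * Real.sin (2*s))
      = fun s => c₀ + (A * Real.cos (2*s) + B * Real.sin (2*s)) := by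
    funext s; ring
  rw [heq]
  exact h.deriv.trans (by ring)

lemma trig_smooth (A B : ℝ) :
    ContDiff ℝ (⊤ : ℕ∞) (fun s => A * Real.cos (2*s) + B * Real.sin (2*s)) := by
  apply ContDiff.add
  · exact contDiff_const.mul (Real.contDiff_cos.comp (contDiff_const.mul contDiff_id))
  · exact contDiff_const.mul (Real.contDiff_sin.comp (contDiff_const.mul contDiff_id))

lemma F_hasDeriv (α β t : ℝ) :
    HasDerivAt (fun t => α * (Real.sin (2*t) * Real.cos (2*t)) + β * (Real.cos (2*t))^2)
      (α * (2*(Real.cos (2*t))^2 - 2*(Real.sin (2*t))^2)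
        + β * (-(4 * Real.cos (2*t) * Real.sin (2*t)))) t := by
  have h2 : HasDerivAt (fun s : ℝ => 2*s) 2 t := by
    simpa using (hasDerivAt_id t).const_mul 2
  have hcos := (Real.hasDerivAt_cos (2*t)).comp t h2
  have hsin := (Real.hasDerivAt_sin (2*t)).comp t h2
  have h := ((hsin.mul hcos).const_mul α).add ((hcos.pow 2).const_mul β)
  exact h.congr_deriv (by simp only [Function.comp_apply]; ring)

lemma fourier_eval (n : ℤ) (t : ℝ) :
    (@fourier (2*π) n) (t : AddCircle (2*π)) = Complex.exp (((n * t : ℝ) : ℂ) * Complex.I) := by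
  rw [fourier_coe_apply]
  congr 1
  have hπ : (π : ℂ) ≠ 0 := Complex.ofReal_ne_zero.mpr Real.pi_ne_zero
  push_cast
  field_simp
/-- For `a < 1/3` the second-variation quadratic form
`Q_a(f) = ∫₀^{2π}((2a−1)f'² − ((4a−3)/4)f''² + ((a−1)/8)f'''²) dt` is
non-positive on smooth `2π`-periodic functions and vanishes exactly on the
trivial `SL(2,ℝ)`-deformations, the span of `1, cos 2t, sin 2t` (whence,
accounting for the overall factor `a`, the circle is a local maximum of `ℬ_a`
for `0 < a < 1/3` and a local minimum for `a < 0`). -/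
theorem circle_second_variation_below (a : ℝ) (ha : a < 1/3)
    (f : ℝ → ℝ) (hf : ContDiff ℝ (⊤ : ℕ∞) f) (hper : Function.Periodic f (2 * π)) :
    (∫ t in (0:ℝ)..(2 * π),
        ((2 * a - 1) * (deriv f t)^2 - (4 * a - 3) / 4 * (deriv (deriv f) t)^2 +
          (a - 1) / 8 * (deriv (deriv (deriv f)) t)^2)) ≤ 0 ∧
    ((∫ t in (0:ℝ)..(2 * π),
        ((2 * a - 1) * (deriv f t)^2 - (4 * a - 3) / 4 * (deriv (deriv f) t)^2 +
          (a - 1) / 8 * (deriv (deriv (deriv f)) t)^2)) = 0 ↔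
      ∃ c₀ c₁ c₂ : ℝ, f = fun t => c₀ + c₁ * Real.cos (2 * t) + c₂ * Real.sin (2 * t)) := by
  have hf1 : ContDiff ℝ (⊤ : ℕ∞) (deriv f) := contDiff_top_deriv_s14 hf
  have hf2 : ContDiff ℝ (⊤ : ℕ∞) (deriv (deriv f)) := contDiff_top_deriv_s14 hf1
  have hf3 : ContDiff ℝ (⊤ : ℕ∞) (deriv (deriv (deriv f))) := contDiff_top_deriv_s14 hf2
  have hp1 : Function.Periodic (deriv f) (2*π) := periodic_deriv'_s14 hper
  have hp2 : Function.Periodic (deriv (deriv f)) (2*π) := periodic_deriv'_s14 hp1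
  have hp3 : Function.Periodic (deriv (deriv (deriv f))) (2*π) := periodic_deriv'_s14 hp2
  have hc1 : Continuous (deriv f) := hf1.continuous
  have hc2 : Continuous (deriv (deriv f)) := hf2.continuous
  have hc3 : Continuous (deriv (deriv (deriv f))) := hf3.continuous
  obtain ⟨S1, E1⟩ := parseval_periodic (deriv f) hc1 hp1
  obtain ⟨S2, E2⟩ := parseval_periodic (deriv (deriv f)) hc2 hp2
  obtain ⟨S3, E3⟩ := parseval_periodic (deriv (deriv (deriv f))) hc3 hp3
  set r : ℤ → ℝ := fun n => ‖cc (deriv f) n‖^2 with hr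
  have hrnn : ∀ n, 0 ≤ r n := fun n => pow_nonneg (norm_nonneg _) 2
  have hd2 : ∀ n : ℤ, cc (deriv (deriv f)) n = (Complex.I * n) * cc (deriv f) n :=
    cc_deriv (deriv f) hf1 hp1
  have hd3 : ∀ n : ℤ, cc (deriv (deriv (deriv f))) n
      = (Complex.I * n) * cc (deriv (deriv f)) n :=
    cc_deriv (deriv (deriv f)) hf2 hp2
  have hn2 : ∀ n : ℤ, ‖cc (deriv (deriv f)) n‖^2 = (n:ℝ)^2 * r n := by
    intro n; rw [hd2 n, norm_I_mul_sq]
  have hn3 : ∀ n : ℤ, ‖cc (deriv (deriv (deriv f))) n‖^2 = (n:ℝ)^2 * ((n:ℝ)^2 * r n) := by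
    intro n; rw [hd3 n, norm_I_mul_sq, hn2 n]
  have S2' : Summable (fun n : ℤ => (n:ℝ)^2 * r n) := by
    have := S2; simp_rw [hn2] at this; exact this
  have S3' : Summable (fun n : ℤ => (n:ℝ)^2 * ((n:ℝ)^2 * r n)) := by
    have := S3; simp_rw [hn3] at this; exact this
  have E2' : (∫ t in (0:ℝ)..(2*π), (deriv (deriv f) t)^2)
      = (2*π) * ∑' n : ℤ, (n:ℝ)^2 * r n := by
    rw [E2]; congr 1; exact tsum_congr hn2
  have E3' : (∫ t in (0:ℝ)..(2*π), (deriv (deriv (deriv f)) t)^2)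
      = (2*π) * ∑' n : ℤ, (n:ℝ)^2 * ((n:ℝ)^2 * r n) := by
    rw [E3]; congr 1; exact tsum_congr hn3
  set w : ℤ → ℝ := fun n =>
    (2*a - 1) * r n - (4*a - 3)/4 * ((n:ℝ)^2 * r n) + (a - 1)/8 * ((n:ℝ)^2 * ((n:ℝ)^2 * r n))
    with hw
  have hwsum : Summable w := ((S1.mul_left _).sub (S2'.mul_left _)).add (S3'.mul_left _)
  have hwle : ∀ n, w n ≤ 0 := by
    intro n
    have hk := key_nonpos a ha n
    have h := mul_nonneg (neg_nonneg.mpr hk) (hrnn n)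
    simp only [hw]
    nlinarith [h]
  have hQ : (∫ t in (0:ℝ)..(2 * π),
        ((2 * a - 1) * (deriv f t)^2 - (4 * a - 3) / 4 * (deriv (deriv f) t)^2 +
          (a - 1) / 8 * (deriv (deriv (deriv f)) t)^2))
      = (2*π) * ∑' n : ℤ, w n := by
    have i1 : IntervalIntegrable (fun t => (2 * a - 1) * (deriv f t)^2)
        MeasureTheory.volume 0 (2*π) :=
      (continuous_const.mul (hc1.pow 2)).intervalIntegrable _ _
    have i2 : IntervalIntegrable (fun t => (4 * a - 3) / 4 * (deriv (deriv f) t)^2)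
        MeasureTheory.volume 0 (2*π) :=
      (continuous_const.mul (hc2.pow 2)).intervalIntegrable _ _
    have i3 : IntervalIntegrable (fun t => (a - 1) / 8 * (deriv (deriv (deriv f)) t)^2)
        MeasureTheory.volume 0 (2*π) :=
      (continuous_const.mul (hc3.pow 2)).intervalIntegrable _ _
    rw [intervalIntegral.integral_add (i1.sub i2) i3, intervalIntegral.integral_sub i1 i2,
      intervalIntegral.integral_const_mul, intervalIntegral.integral_const_mul,
      intervalIntegral.integral_const_mul, E1, E2', E3']
    rw [Summable.tsum_add ((S1.mul_left _).sub (S2'.mul_left _)) (S3'.mul_left _),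
      Summable.tsum_sub (S1.mul_left _) (S2'.mul_left _),
      tsum_mul_left, tsum_mul_left, tsum_mul_left]
    ring
  have hsumle : (∑' n : ℤ, w n) ≤ 0 := by
    have h0 := tsum_nonneg (L := .unconditional ℤ) (fun n : ℤ => neg_nonneg.mpr (hwle n))
    rw [tsum_neg] at h0
    linarith
  constructor
  · rw [hQ]
    exact mul_nonpos_iff.mpr (Or.inl ⟨by positivity, hsumle⟩)
  constructor
  · -- equality implies trig
    intro hQ0
    rw [hQ] at hQ0
    have hsum0 : (∑' n : ℤ, w n) = 0 := by
      have : (2*π) ≠ 0 := by positivity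
      exact (mul_eq_zero.mp hQ0).resolve_left this
    have hallzero : ∀ n : ℤ, n.natAbs ≠ 2 → cc (deriv f) n = 0 := by
      intro n hn
      by_contra hne
      have hrpos : 0 < r n := pow_pos (norm_pos_iff.mpr hne) 2
      have hwn : 0 < -w n := by
        have hk := key_neg a ha n hn
        have := mul_pos (neg_pos.mpr hk) hrpos
        simp only [hw]
        nlinarith [this]
      have hpos : 0 < ∑' n : ℤ, (-w n) :=
        Summable.tsum_pos hwsum.neg (fun i => neg_nonneg.mpr (hwle i)) n hwn
      rw [tsum_neg] at hpos
      linarith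
    -- reconstruction of f from vanishing coefficients
    have hcoeffU : ∀ n : ℤ, fourierCoeff (⇑(periodicLift (deriv f) hc1 hp1)) n = cc (deriv f) n :=
      fun n => fourierCoeff_periodicLift (deriv f) hc1 hp1 n
    have hsupp : ∀ n ∉ ({-2, 2} : Finset ℤ), fourierCoeff (⇑(periodicLift (deriv f) hc1 hp1)) n = 0 := by
      intro n hn
      rw [hcoeffU]
      apply hallzero
      intro habs
      rcases Int.natAbs_eq_iff.mp habs with h | h
      · exact hn (by simp [h])
      · exact hn (by simp [h])
    have hsummable : Summable (fun n => fourierCoeff (⇑(periodicLift (deriv f) hc1 hp1)) n) :=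
      summable_of_ne_finset_zero hsupp
    set A : ℝ := (fourierCoeff (⇑(periodicLift (deriv f) hc1 hp1)) (-2)).re
        + (fourierCoeff (⇑(periodicLift (deriv f) hc1 hp1)) 2).re with hA
    set B : ℝ := (fourierCoeff (⇑(periodicLift (deriv f) hc1 hp1)) (-2)).im
        - (fourierCoeff (⇑(periodicLift (deriv f) hc1 hp1)) 2).im with hB
    have hg1 : ∀ t : ℝ, deriv f t = A * Real.cos (2*t) + B * Real.sin (2*t) := by
      intro t
      have h1 := has_pointwise_sum_fourier_series_of_summable hsummable ((t : ℝ) : AddCircle (2*π))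
      have h2 : HasSum (fun i => fourierCoeff (⇑(periodicLift (deriv f) hc1 hp1)) i
            • fourier i ((t:ℝ) : AddCircle (2*π)))
          (∑ i ∈ ({-2,2} : Finset ℤ), fourierCoeff (⇑(periodicLift (deriv f) hc1 hp1)) i
            • fourier i ((t:ℝ) : AddCircle (2*π))) := by
        apply hasSum_sum_of_ne_finset_zero
        intro b hb
        rw [hsupp b hb, zero_smul]
      have h3 := h1.unique h2
      have h4 : (periodicLift (deriv f) hc1 hp1) ((t : ℝ) : AddCircle (2*π))
          = ((deriv f t : ℝ) : ℂ) := periodicLift_coe _ hc1 hp1 t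
      rw [h4, Finset.sum_pair (by decide : (-2 : ℤ) ≠ 2), fourier_eval, fourier_eval] at h3
      have h5 := congrArg Complex.re h3
      simp only [smul_eq_mul, Complex.ofReal_re, Complex.add_re, Complex.mul_re,
        Complex.exp_ofReal_mul_I_re, Complex.exp_ofReal_mul_I_im] at h5
      push_cast at h5
      rw [show ((-2:ℝ))*t = -(2*t) by ring, Real.cos_neg, Real.sin_neg] at h5
      rw [h5, hA, hB]
      ring
    have hFTC : ∀ t : ℝ, (∫ s in (0:ℝ)..t, deriv f s) = f t - f 0 := by
      intro t
      exact intervalIntegral.integral_deriv_eq_sub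
        (fun x _ => (hf.differentiable (by simp)).differentiableAt)
        (hc1.intervalIntegrable _ _)
    refine ⟨f 0 + B/2, -B/2, A/2, funext fun t => ?_⟩
    have h6 := hFTC t
    rw [intervalIntegral.integral_congr
      (g := fun s => A * Real.cos (2*s) + B * Real.sin (2*s)) (fun s _ => hg1 s)] at h6
    have hint : (∫ s in (0:ℝ)..t, (A * Real.cos (2*s) + B * Real.sin (2*s)))
        = (-B/2) * Real.cos (2*t) + (A/2) * Real.sin (2*t) + B/2 := by
      have hF : ∀ s ∈ Set.uIcc (0:ℝ) t, HasDerivAt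
          (fun s => (-B/2) * Real.cos (2*s) + (A/2) * Real.sin (2*s))
          (A * Real.cos (2*s) + B * Real.sin (2*s)) s := by
        intro s _
        have h := trig_hasDerivAt (-B/2) (A/2) s
        convert h using 1
        ring
      rw [intervalIntegral.integral_eq_sub_of_hasDerivAt hF
        ((trig_smooth A B).continuous.intervalIntegrable _ _)]
      simp only [mul_zero, Real.cos_zero, Real.sin_zero, mul_one]
      ring
    rw [hint] at h6
    show f t = f 0 + B/2 + -B/2 * Real.cos (2*t) + A/2 * Real.sin (2*t)
    linarith [h6]

  · -- trig implies equality
    rintro ⟨c₀, c₁, c₂, rfl⟩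
    set K : ℝ := 16*a - 12 with hK
    set α : ℝ := -(K*(c₁^2-c₂^2))/2 with hα
    set β : ℝ := K*(c₁*c₂) with hβ
    have hEq : ∀ t : ℝ, (2 * a - 1) * (deriv (fun t => c₀ + c₁ * Real.cos (2 * t) + c₂ * Real.sin (2 * t)) t)^2
          - (4 * a - 3) / 4 * (deriv (deriv (fun t => c₀ + c₁ * Real.cos (2 * t) + c₂ * Real.sin (2 * t))) t)^2
          + (a - 1) / 8 * (deriv (deriv (deriv (fun t => c₀ + c₁ * Real.cos (2 * t) + c₂ * Real.sin (2 * t)))) t)^2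
        = α * (2*(Real.cos (2*t))^2 - 2*(Real.sin (2*t))^2)
          + β * (-(4 * Real.cos (2*t) * Real.sin (2*t))) := by
      intro t
      simp only [trig3_deriv, trig2_deriv]
      rw [hα, hβ, hK]
      ring
    rw [intervalIntegral.integral_congr
      (g := fun t => α * (2*(Real.cos (2*t))^2 - 2*(Real.sin (2*t))^2)
          + β * (-(4 * Real.cos (2*t) * Real.sin (2*t)))) (fun t _ => hEq t)]
    have hcont : Continuous (fun t : ℝ => α * (2*(Real.cos (2*t))^2 - 2*(Real.sin (2*t))^2)
          + β * (-(4 * Real.cos (2*t) * Real.sin (2*t)))) := by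
      have h1 : Continuous (fun t : ℝ => Real.cos (2*t)) :=
        Real.continuous_cos.comp (continuous_const.mul continuous_id)
      have h2 : Continuous (fun t : ℝ => Real.sin (2*t)) :=
        Real.continuous_sin.comp (continuous_const.mul continuous_id)
      exact (continuous_const.mul ((continuous_const.mul (h1.pow 2)).sub
          (continuous_const.mul (h2.pow 2)))).add
        (continuous_const.mul (((continuous_const.mul h1).mul h2).neg))
    rw [intervalIntegral.integral_eq_sub_of_hasDerivAt
      (fun t _ => F_hasDeriv α β t) (hcont.intervalIntegrable _ _)]
    have hs : Real.sin (2*(2*π)) = 0 := by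
      rw [show (2:ℝ)*(2*π) = ((4:ℤ):ℝ)*π by push_cast; ring]
      exact Real.sin_int_mul_pi 4
    have hc : Real.cos (2*(2*π)) = 1 := by
      rw [show (2:ℝ)*(2*π) = ((2:ℤ):ℝ)*(2*π) by push_cast; ring]
      exact Real.cos_int_mul_two_pi 2
    rw [hs, hc]
    simp only [mul_zero, Real.cos_zero, Real.sin_zero, mul_one, zero_mul, one_pow]
    ring
end
end

section
/- Let 1/3 < a < 7/5. Then the quadratic form Q_a(f) := ∫₀^{2π} ( (2a−1) f'(t)² − ((4a−3)/4) f''(t)² + ((a−1)/8) f'''(t)² ) dt on smooth 2π-periodic functions is not sign-definite: there exist smooth 2π-periodic functions f and g with Q_a(f) > 0 and Q_a(g) < 0. (For instance f(t) = sin t and g(t) = sin 3t work.) -/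
open Real

lemma sin6pi : Real.sin (3*(2*π)) = 0 := by
  rw [show (3:ℝ)*(2*π) = (6:ℤ)*π by push_cast; ring]
  exact Real.sin_int_mul_pi 6

lemma cos3_sq : ∫ t in (0:ℝ)..(2*π), Real.cos (3*t) ^ 2 = π := by
  have h := intervalIntegral.integral_comp_mul_left (fun x => Real.cos x ^ 2)
    (a := 0) (b := 2*π) (c := (3:ℝ)) (by norm_num)
  simp only [mul_zero] at h
  rw [h, integral_cos_sq, sin6pi]
  simp; ring

lemma sin3_sq : ∫ t in (0:ℝ)..(2*π), Real.sin (3*t) ^ 2 = π := by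
  have h := intervalIntegral.integral_comp_mul_left (fun x => Real.sin x ^ 2)
    (a := 0) (b := 2*π) (c := (3:ℝ)) (by norm_num)
  simp only [mul_zero] at h
  rw [h, integral_sin_sq, sin6pi]
  simp; ring

lemma cos1_sq : ∫ t in (0:ℝ)..(2*π), Real.cos t ^ 2 = π := by
  rw [integral_cos_sq, Real.sin_two_pi]; simp

lemma sin1_sq : ∫ t in (0:ℝ)..(2*π), Real.sin t ^ 2 = π := by
  rw [integral_sin_sq, Real.sin_two_pi]; simp

lemma hx3 (t : ℝ) : HasDerivAt (fun x : ℝ => 3*x) 3 t := by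
  simpa using (hasDerivAt_id t).const_mul (3:ℝ)

lemma d1 : deriv (fun t => Real.sin (3*t)) = fun t => 3 * Real.cos (3*t) := by
  funext t
  have := (Real.hasDerivAt_sin (3*t)).comp t (hx3 t)
  simpa [mul_comm] using this.deriv

lemma d2 : deriv (fun t => 3 * Real.cos (3*t)) = fun t => -9 * Real.sin (3*t) := by
  funext t
  have h : HasDerivAt (fun t : ℝ => 3 * Real.cos (3*t)) (3 * (-Real.sin (3*t) * 3)) t :=
    ((Real.hasDerivAt_cos (3*t)).comp t (hx3 t)).const_mul (3:ℝ)
  rw [h.deriv]; ring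

lemma d3 : deriv (fun t => -9 * Real.sin (3*t)) = fun t => -27 * Real.cos (3*t) := by
  funext t
  have h : HasDerivAt (fun t : ℝ => -9 * Real.sin (3*t)) (-9 * (Real.cos (3*t) * 3)) t :=
    ((Real.hasDerivAt_sin (3*t)).comp t (hx3 t)).const_mul (-9:ℝ)
  rw [h.deriv]; ring

lemma mixInt (c1 c2 : ℝ) :
    (∫ t in (0:ℝ)..(2*π), (c1 * Real.cos (3*t) ^ 2 + c2 * Real.sin (3*t) ^ 2))
      = c1 * π + c2 * π := by
  rw [intervalIntegral.integral_add
      (Continuous.intervalIntegrable (by fun_prop) _ _)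
      (Continuous.intervalIntegrable (by fun_prop) _ _),
    intervalIntegral.integral_const_mul, intervalIntegral.integral_const_mul,
    cos3_sq, sin3_sq]

lemma mixInt1 (c1 c2 : ℝ) :
    (∫ t in (0:ℝ)..(2*π), (c1 * Real.cos t ^ 2 + c2 * Real.sin t ^ 2))
      = c1 * π + c2 * π := by
  rw [intervalIntegral.integral_add
      (Continuous.intervalIntegrable (by fun_prop) _ _)
      (Continuous.intervalIntegrable (by fun_prop) _ _),
    intervalIntegral.integral_const_mul, intervalIntegral.integral_const_mul,
    cos1_sq, sin1_sq]

/-- For `1/3 < a < 7/5` the second-variation quadratic form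
`Q_a(f) = ∫₀^{2π}((2a−1)f'² − ((4a−3)/4)f''² + ((a−1)/8)f'''²) dt` is not
sign-definite: it takes both a positive and a negative value on smooth
`2π`-periodic functions. -/
theorem second_variation_indefinite (a : ℝ) (ha1 : 1/3 < a) (ha2 : a < 7/5) :
    (∃ f : ℝ → ℝ, ContDiff ℝ (⊤ : ℕ∞) f ∧ Function.Periodic f (2 * π) ∧
      0 < ∫ t in (0:ℝ)..(2 * π),
        ((2 * a - 1) * (deriv f t)^2 - (4 * a - 3) / 4 * (deriv (deriv f) t)^2 +
          (a - 1) / 8 * (deriv (deriv (deriv f)) t)^2)) ∧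
    (∃ g : ℝ → ℝ, ContDiff ℝ (⊤ : ℕ∞) g ∧ Function.Periodic g (2 * π) ∧
      (∫ t in (0:ℝ)..(2 * π),
        ((2 * a - 1) * (deriv g t)^2 - (4 * a - 3) / 4 * (deriv (deriv g) t)^2 +
          (a - 1) / 8 * (deriv (deriv (deriv g)) t)^2)) < 0) := by
  constructor
  · refine ⟨Real.sin, Real.contDiff_sin, fun x => by simp [Real.sin_add_two_pi], ?_⟩
    have e1 : deriv Real.sin = Real.cos := Real.deriv_sin
    have e2 : deriv Real.cos = fun x => -Real.sin x := Real.deriv_cos'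
    have e3 : deriv (fun x => -Real.sin x) = fun x => -Real.cos x := by
      funext x; simpa using ((Real.hasDerivAt_sin x).neg).deriv
    have key : (∫ t in (0:ℝ)..(2 * π),
        ((2 * a - 1) * (deriv Real.sin t)^2 - (4 * a - 3) / 4 * (deriv (deriv Real.sin) t)^2 +
          (a - 1) / 8 * (deriv (deriv (deriv Real.sin)) t)^2))
        = ((2*a-1) + (a-1)/8) * π + (-(4*a-3)/4) * π := by
      rw [e1, e2, e3, ← mixInt1 ((2*a-1) + (a-1)/8) (-(4*a-3)/4)]
      congr 1; funext t; ring
    rw [key]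
    nlinarith [Real.pi_pos]
  · refine ⟨fun t => Real.sin (3*t), ?_, ?_, ?_⟩
    · exact Real.contDiff_sin.comp (contDiff_const.mul contDiff_id)
    · intro x
      simp only
      rw [mul_add, show (3:ℝ)*(2*π) = (3:ℤ)*(2*π) by push_cast; ring,
        Real.sin_add_int_mul_two_pi]
    · have key : (∫ t in (0:ℝ)..(2 * π),
          ((2 * a - 1) * (deriv (fun t => Real.sin (3*t)) t)^2
            - (4 * a - 3) / 4 * (deriv (deriv (fun t => Real.sin (3*t))) t)^2 +
            (a - 1) / 8 * (deriv (deriv (deriv (fun t => Real.sin (3*t)))) t)^2))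
          = (9*(2*a-1) + 729*(a-1)/8) * π + (-81*(4*a-3)/4) * π := by
        rw [d1, d2, d3, ← mixInt (9*(2*a-1) + 729*(a-1)/8) (-81*(4*a-3)/4)]
        congr 1; funext t; ring
      rw [key]
      nlinarith [Real.pi_pos]
end

section
/- Let γ: ℝ → ℝ² be a smooth 2π-periodic curve in centroaffine parameterization, [γ(t), γ'(t)] = 1, with centroaffine curvature p(t) := [γ'(t), γ''(t)] > 0 for all t, and suppose there is a constant c ∈ ℝ such that F := p^{−2/3} satisfies F'' = 2 F^{−1/2} + c (the integrated Euler–Lagrange equation for the exponent a = 1/3). Then the image of γ is a multiply traversed conic; precisely, there exist a positive definite symmetric 2×2 matrix S and a vector v ∈ ℝ² such that ⟨S(γ(t) − v), γ(t) − v⟩ = 1 for all t, i.e. γ traces an ellipse (possibly multiply covered, and not necessarily centered at the origin). -/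
open Real Matrix

private lemma const_of_hasDerivAt_zero' {f : ℝ → ℝ} (hf : ∀ t, HasDerivAt f 0 t) (t : ℝ) :
    f t = f 0 :=
  is_const_of_deriv_eq_zero (fun s => (hf s).differentiableAt) (fun s => (hf s).deriv) t 0

private lemma conserved
    (x y dx dy p q r s ℓ : ℝ → ℝ)
    (hx : ∀ t, HasDerivAt x (dx t) t) (hy : ∀ t, HasDerivAt y (dy t) t)
    (hdx : ∀ t, HasDerivAt dx (-(p t) * x t) t)
    (hdy : ∀ t, HasDerivAt dy (-(p t) * y t) t)
    (hq : ∀ t, HasDerivAt q (2 * r t) t)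
    (hr : ∀ t, HasDerivAt r (s t - p t * q t) t)
    (hs : ∀ t, HasDerivAt s (-2 * p t * r t) t)
    (hl : ∀ t, HasDerivAt ℓ (-2 * r t) t)
    (hsum : ∀ t, p t * (ℓ t + 2 * q t) = 2 * s t) :
    (∀ t, q t * (dy t * dy t) - 2 * r t * (y t * dy t) + s t * (y t * y t)
        = q 0 * (dy 0 * dy 0) - 2 * r 0 * (y 0 * dy 0) + s 0 * (y 0 * y 0)) ∧
    (∀ t, -(q t * (dx t * dy t)) + r t * (x t * dy t + dx t * y t) - s t * (x t * y t)
        = -(q 0 * (dx 0 * dy 0)) + r 0 * (x 0 * dy 0 + dx 0 * y 0) - s 0 * (x 0 * y 0)) ∧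
    (∀ t, q t * (dx t * dx t) - 2 * r t * (x t * dx t) + s t * (x t * x t)
        = q 0 * (dx 0 * dx 0) - 2 * r 0 * (x 0 * dx 0) + s 0 * (x 0 * x 0)) ∧
    (∀ t, ℓ t * dy t + 2 * r t * y t = ℓ 0 * dy 0 + 2 * r 0 * y 0) ∧
    (∀ t, -(2 * r t * x t) - ℓ t * dx t = -(2 * r 0 * x 0) - ℓ 0 * dx 0) := by
  refine ⟨fun t => ?_, fun t => ?_, fun t => ?_, fun t => ?_, fun t => ?_⟩
  · refine const_of_hasDerivAt_zero' (f := fun u => q u * (dy u * dy u) - 2 * r u * (y u * dy u) + s u * (y u * y u)) (fun u => ?_) t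
    have h := (((hq u).mul ((hdy u).mul (hdy u))).sub
        (((hr u).const_mul 2).mul ((hy u).mul (hdy u)))).add
        ((hs u).mul ((hy u).mul (hy u)))
    refine h.congr_deriv (Eq.symm ?_)
    simp only [Pi.mul_apply, Pi.add_apply]
    ring
  · refine const_of_hasDerivAt_zero' (f := fun u => -(q u * (dx u * dy u)) + r u * (x u * dy u + dx u * y u) - s u * (x u * y u)) (fun u => ?_) t
    have h := ((((hq u).mul ((hdx u).mul (hdy u))).neg.add
        ((hr u).mul (((hx u).mul (hdy u)).add ((hdx u).mul (hy u))))).sub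
        ((hs u).mul ((hx u).mul (hy u))))
    refine h.congr_deriv (Eq.symm ?_)
    simp only [Pi.mul_apply, Pi.add_apply]
    ring
  · refine const_of_hasDerivAt_zero' (f := fun u => q u * (dx u * dx u) - 2 * r u * (x u * dx u) + s u * (x u * x u)) (fun u => ?_) t
    have h := (((hq u).mul ((hdx u).mul (hdx u))).sub
        (((hr u).const_mul 2).mul ((hx u).mul (hdx u)))).add
        ((hs u).mul ((hx u).mul (hx u)))
    refine h.congr_deriv (Eq.symm ?_)
    simp only [Pi.mul_apply, Pi.add_apply]
    ring
  · refine const_of_hasDerivAt_zero' (f := fun u => ℓ u * dy u + 2 * r u * y u) (fun u => ?_) t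
    have h := ((hl u).mul (hdy u)).add (((hr u).const_mul 2).mul (hy u))
    refine h.congr_deriv (Eq.symm ?_)
    linear_combination (y u) * hsum u
  · refine const_of_hasDerivAt_zero' (f := fun u => -(2 * r u * x u) - ℓ u * dx u) (fun u => ?_) t
    have h := ((((hr u).const_mul 2).mul (hx u)).neg).sub ((hl u).mul (hdx u))
    refine h.congr_deriv (Eq.symm ?_)
    linear_combination -(x u) * hsum u

set_option maxHeartbeats 2000000 in
private lemma scalar_main
    (x y dx dy ddx ddy F : ℝ → ℝ) (c : ℝ)
    (hx : ∀ t, HasDerivAt x (dx t) t) (hy : ∀ t, HasDerivAt y (dy t) t)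
    (hdx : ∀ t, HasDerivAt dx (ddx t) t) (hdy : ∀ t, HasDerivAt dy (ddy t) t)
    (hw : ∀ t, x t * dy t - y t * dx t = 1)
    (hp0 : ∀ t, 0 < dx t * ddy t - dy t * ddx t)
    (hFdef : F = fun t => (dx t * ddy t - dy t * ddx t) ^ (-(2:ℝ)/3))
    (hFs : ContDiff ℝ (⊤:ℕ∞) F)
    (hode : ∀ t, deriv (deriv F) t = 2 * F t ^ (-(1:ℝ)/2) + c)
    (hc : c < 0) :
    ∃ A B C ρ v1 v2 : ℝ, 0 < ρ ∧ 0 < A ∧ 0 < A * C - B^2 ∧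
      ∀ t, A*(x t - v1)^2 + 2*B*((x t - v1)*(y t - v2)) + C*(y t - v2)^2 = ρ := by
  obtain ⟨p, hpdef⟩ : ∃ p : ℝ → ℝ, p = fun t => dx t * ddy t - dy t * ddx t := ⟨_, rfl⟩
  have hp0' : ∀ t, 0 < p t := by rw [hpdef]; exact hp0
  have hFdef' : F = fun t => p t ^ (-(2:ℝ)/3) := by rw [hpdef]; exact hFdef
  have hF0 : ∀ t, 0 < F t := by
    intro t; rw [hFdef']; exact rpow_pos_of_pos (hp0' t) _
  obtain ⟨F', hF'def⟩ : ∃ g : ℝ → ℝ, g = deriv F := ⟨_, rfl⟩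
  have hFd : ∀ t, HasDerivAt F (F' t) t := by
    rw [hF'def]; exact fun t => (hFs.differentiable (by simp) t).hasDerivAt
  have hF'' : ∀ t, HasDerivAt F' (2 * F t ^ (-(1:ℝ)/2) + c) t := by
    rw [hF'def]
    intro t
    exact hode t ▸ ((contDiff_infty_iff_deriv.mp hFs).2.differentiable (by simp) t).hasDerivAt
  obtain ⟨σ, hσdef⟩ : ∃ g : ℝ → ℝ, g = fun t => Real.sqrt (F t) := ⟨_, rfl⟩
  have hσ0 : ∀ t, 0 < σ t := by rw [hσdef]; exact fun t => Real.sqrt_pos.2 (hF0 t)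
  have hσ2 : ∀ t, σ t ^ 2 = F t := by rw [hσdef]; exact fun t => Real.sq_sqrt (hF0 t).le
  have hσd : ∀ t, HasDerivAt σ (F' t / (2 * σ t)) t := by
    rw [hσdef]; exact fun t => (hFd t).sqrt (hF0 t).ne'
  have hhalf : ∀ t, F t ^ (-(1:ℝ)/2) = (σ t)⁻¹ := by
    intro t
    rw [show (-(1:ℝ)/2) = -(1/2) by norm_num, Real.rpow_neg (hF0 t).le]
    simp only [hσdef]
    rw [Real.sqrt_eq_rpow]
  obtain ⟨k, hkdef⟩ : ∃ z : ℝ, z = (8 * σ 0 + 2*c*F 0 - (F' 0)^2)/8 := ⟨_, rfl⟩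
  have hE : ∀ t, (F' t)^2 = 8 * σ t + 2*c*F t - 8*k := by
    have hG : ∀ t, (F' t)^2 - 8 * σ t - 2*c*F t = (F' 0)^2 - 8 * σ 0 - 2*c*F 0 := by
      refine fun t => const_of_hasDerivAt_zero'
        (f := fun u => (F' u)^2 - 8 * σ u - 2*c*F u) (fun u => ?_) t
      have h := ((((hF'' u).mul (hF'' u)).sub ((hσd u).const_mul 8)).sub
        ((hFd u).const_mul (2*c)))
      have h2 : HasDerivAt (fun u => F' u * F' u - 8 * σ u - 2*c*F u) 0 u := by
        refine h.congr_deriv (Eq.symm ?_)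
        rw [hhalf u]
        field_simp
        ring
      have h3 : (fun u => (F' u)^2 - 8 * σ u - 2*c*F u)
           = (fun u => F' u * F' u - 8 * σ u - 2*c*F u) := by
        funext u; ring
      rw [h3]; exact h2
    intro t
    have := hG t
    rw [hkdef]; linarith
  have hpF1 : ∀ t, p t * F t * σ t = 1 := by
    intro t
    have h1 : F t ^ (-(3:ℝ)/2) = p t := by
      conv_lhs => rw [hFdef']
      show ((p t) ^ (-(2:ℝ)/3)) ^ (-(3:ℝ)/2) = p t
      rw [← Real.rpow_mul (hp0' t).le]
      norm_num
    have h2 : σ t = F t ^ ((1:ℝ)/2) := by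
      simp only [hσdef]
      rw [Real.sqrt_eq_rpow]
    calc p t * F t * σ t
        = F t ^ (-(3:ℝ)/2) * F t ^ (1:ℝ) * F t ^ ((1:ℝ)/2) := by
          rw [h1, Real.rpow_one, h2]
      _ = F t ^ ((-(3:ℝ)/2) + 1 + 1/2) := by
          rw [← Real.rpow_add (hF0 t), ← Real.rpow_add (hF0 t)]
      _ = 1 := by norm_num
  have hcube : ∀ t, p t * σ t ^ 3 = 1 := by
    intro t
    have h := hpF1 t
    linear_combination h + (p t * σ t) * hσ2 t
  obtain ⟨q, hqdef⟩ : ∃ g : ℝ → ℝ, g = fun t => σ t - k := ⟨_, rfl⟩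
  obtain ⟨r, hrdef⟩ : ∃ g : ℝ → ℝ, g = fun t => F' t / (4 * σ t) := ⟨_, rfl⟩
  obtain ⟨s, hsdef⟩ : ∃ g : ℝ → ℝ, g = fun t => (2 * F t)⁻¹ := ⟨_, rfl⟩
  obtain ⟨l, hldef⟩ : ∃ g : ℝ → ℝ, g = fun t => 2*k - σ t := ⟨_, rfl⟩
  have hq : ∀ t, HasDerivAt q (2 * r t) t := by
    intro t
    simp only [hqdef, hrdef]
    have h := (hσd t).sub_const k
    refine h.congr_deriv (Eq.symm ?_)
    field_simp [(hσ0 t).ne']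
    ring
  have hs : ∀ t, HasDerivAt s (-2 * p t * r t) t := by
    intro t
    simp only [hsdef, hrdef]
    have h := ((hFd t).const_mul 2).inv (mul_pos two_pos (hF0 t)).ne'
    refine h.congr_deriv (Eq.symm ?_)
    rw [← hσ2 t]
    field_simp [(hσ0 t).ne']
    linear_combination (-4 * F' t) * hcube t
  have hl : ∀ t, HasDerivAt l (-2 * r t) t := by
    intro t
    simp only [hldef, hrdef]
    have h := (hσd t).const_sub (2*k)
    refine h.congr_deriv (Eq.symm ?_)
    field_simp [(hσ0 t).ne']
    ring
  have hr : ∀ t, HasDerivAt r (s t - p t * q t) t := by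
    intro t
    simp only [hrdef, hsdef, hqdef]
    have h := (hF'' t).div ((hσd t).const_mul 4)
      (mul_pos (by norm_num : (0:ℝ) < 4) (hσ0 t)).ne'
    refine h.congr_deriv (Eq.symm ?_)
    rw [hhalf t]
    have h3 : F' t ^ 2 = 8 * σ t + 2*c*σ t^2 - 8*k := by rw [hσ2 t]; exact hE t
    rw [← hσ2 t]
    field_simp [(hσ0 t).ne']
    linear_combination (8*k - 8*σ t) * hcube t + h3
  have hsum : ∀ t, p t * (l t + 2 * q t) = 2 * s t := by
    intro t
    simp only [hldef, hqdef, hsdef]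
    rw [← hσ2 t]
    field_simp [(hσ0 t).ne']
    linear_combination hcube t
  -- second derivative of the curve
  have hD : ∀ t, x t * ddy t - y t * ddx t = 0 := by
    intro t
    have h1 : HasDerivAt (fun u => x u * dy u - y u * dx u)
        (x t * ddy t - y t * ddx t) t := by
      have h := ((hx t).mul (hdy t)).sub ((hy t).mul (hdx t))
      refine h.congr_deriv (Eq.symm ?_)
      ring
    have h2 : (fun u => x u * dy u - y u * dx u) = fun _ => (1:ℝ) := funext hw
    rw [h2] at h1
    exact h1.unique (hasDerivAt_const t 1)
  have hddx : ∀ t, HasDerivAt dx (-(p t) * x t) t := by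
    intro t
    have e : ddx t = -(p t) * x t := by
      rw [hpdef]
      linear_combination (-(ddx t)) * hw t + (dx t) * hD t
    exact e ▸ hdx t
  have hddy : ∀ t, HasDerivAt dy (-(p t) * y t) t := by
    intro t
    have e : ddy t = -(p t) * y t := by
      rw [hpdef]
      linear_combination (-(ddy t)) * hw t + (dy t) * hD t
    exact e ▸ hdy t
  -- determinant identity
  have hdet : ∀ t, q t * s t - r t^2 = -c/8 := by
    intro t
    have h3 : F' t ^ 2 = 8 * σ t + 2*c*σ t^2 - 8*k := by rw [hσ2 t]; exact hE t
    simp only [hqdef, hrdef, hsdef]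
    rw [← hσ2 t]
    field_simp [(hσ0 t).ne']
    linear_combination (-16) * h3
  have hql : ∀ t, q t + l t = k := by
    intro t
    simp only [hqdef, hldef]
    ring
  have hs0 : ∀ t, 0 < s t := by
    rw [hsdef]; exact fun t => inv_pos.2 (mul_pos two_pos (hF0 t))
  have hq0pos : 0 < q 0 := by
    have h := hdet 0
    nlinarith [hs0 0, sq_nonneg (r 0), hc]
  obtain ⟨hm11, hm12, hm22, hw1, hw2⟩ :=
    conserved x y dx dy p q r s l hx hy hddx hddy hq hr hs hl hsum
  obtain ⟨A, hAdef⟩ : ∃ z : ℝ, z = q 0 * (dy 0 * dy 0) - 2 * r 0 * (y 0 * dy 0) + s 0 * (y 0 * y 0) := ⟨_, rfl⟩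
  obtain ⟨B, hBdef⟩ : ∃ z : ℝ, z = -(q 0 * (dx 0 * dy 0)) + r 0 * (x 0 * dy 0 + dx 0 * y 0) - s 0 * (x 0 * y 0) := ⟨_, rfl⟩
  obtain ⟨C, hCdef⟩ : ∃ z : ℝ, z = q 0 * (dx 0 * dx 0) - 2 * r 0 * (x 0 * dx 0) + s 0 * (x 0 * x 0) := ⟨_, rfl⟩
  obtain ⟨W1, hW1def⟩ : ∃ z : ℝ, z = l 0 * dy 0 + 2 * r 0 * y 0 := ⟨_, rfl⟩
  obtain ⟨W2, hW2def⟩ : ∃ z : ℝ, z = -(2 * r 0 * x 0) - l 0 * dx 0 := ⟨_, rfl⟩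
  have hconic : ∀ t, A*(x t*x t) + 2*B*(x t*y t) + C*(y t*y t) + W1*x t + W2*y t = k := by
    intro t
    rw [hAdef, hBdef, hCdef, hW1def, hW2def,
      ← hm11 t, ← hm12 t, ← hm22 t, ← hw1 t, ← hw2 t]
    linear_combination (q t * (x t * dy t - y t * dx t + 1) + l t) * hw t + hql t
  have hdAC : A*C - B^2 = -c/8 := by
    have hring : A*C - B^2 = (q 0 * s 0 - r 0^2) * (x 0 * dy 0 - y 0 * dx 0)^2 := by
      rw [hAdef, hBdef, hCdef]; ring
    rw [hring, hw 0, hdet 0]; ring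
  have hACpos : 0 < A*C - B^2 := by rw [hdAC]; linarith
  have hA : 0 < A := by
    by_cases hy0 : y 0 = 0
    · have hdy0 : dy 0 ≠ 0 := by
        intro h0
        have h := hw 0
        rw [hy0, h0] at h
        norm_num at h
      rw [hAdef, hy0]
      have h2 : 0 < dy 0 * dy 0 := mul_self_pos.2 hdy0
      nlinarith [hq0pos]
    · have hy2 : 0 < y 0 * y 0 := mul_self_pos.2 hy0
      have h8 : 0 < q 0 * s 0 - r 0^2 := by rw [hdet 0]; linarith
      have hRHS : 0 < (q 0*dy 0 - r 0*y 0)^2 + (q 0*s 0 - r 0^2)*(y 0*y 0) :=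
        add_pos_of_nonneg_of_pos (sq_nonneg _) (mul_pos h8 hy2)
      have hqA : q 0 * A = (q 0*dy 0 - r 0*y 0)^2 + (q 0*s 0 - r 0^2)*(y 0*y 0) := by
        rw [hAdef]; ring
      have hpos : 0 < q 0 * A := hqA ▸ hRHS
      by_contra hA0
      push_neg at hA0
      exact absurd hpos (not_lt.2 (mul_nonpos_of_nonneg_of_nonpos hq0pos.le hA0))
  have hΔ : A*C - B^2 ≠ 0 := ne_of_gt hACpos
  obtain ⟨v1, hv1def⟩ : ∃ z : ℝ, z = -(C*W1 - B*W2)/(2*(A*C - B^2)) := ⟨_, rfl⟩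
  obtain ⟨v2, hv2def⟩ : ∃ z : ℝ, z = -(A*W2 - B*W1)/(2*(A*C - B^2)) := ⟨_, rfl⟩
  have hv1 : 2*(A*v1 + B*v2) = -W1 := by
    rw [hv1def, hv2def]
    field_simp [hΔ]
    ring
  have hv2 : 2*(B*v1 + C*v2) = -W2 := by
    rw [hv1def, hv2def]
    field_simp [hΔ]
    rw [div_eq_iff (by rw [mul_comm C A]; exact hΔ)]
    ring
  obtain ⟨ρ, hρdef⟩ : ∃ z : ℝ, z = k + (A*(v1*v1) + 2*B*(v1*v2) + C*(v2*v2)) := ⟨_, rfl⟩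
  have hfinal : ∀ t, A*(x t - v1)^2 + 2*B*((x t - v1)*(y t - v2)) + C*(y t - v2)^2 = ρ := by
    intro t
    rw [hρdef]
    linear_combination hconic t - (x t) * hv1 - (y t) * hv2
  have hρnn : 0 ≤ ρ := by
    have h := hfinal 0
    have hAρ : A * ρ = (A*(x 0 - v1) + B*(y 0 - v2))^2 + (A*C - B^2)*(y 0 - v2)^2 := by
      rw [← h]; ring
    have h1 : 0 ≤ A * ρ :=
      hAρ ▸ add_nonneg (sq_nonneg _) (mul_nonneg hACpos.le (sq_nonneg _))
    by_contra hneg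
    push_neg at hneg
    exact absurd h1 (not_le.2 (mul_neg_of_pos_of_neg hA hneg))
  have hρpos : 0 < ρ := by
    rcases hρnn.lt_or_eq with h | h
    · exact h
    · exfalso
      have hxy : ∀ t, x t = v1 ∧ y t = v2 := by
        intro t
        have h1 := hfinal t
        have e : (A*(x t - v1) + B*(y t - v2))^2 + (A*C - B^2)*(y t - v2)^2 = 0 := by
          linear_combination A * h1 - A * h
        have h3 : 0 ≤ (A*C - B^2)*(y t - v2)^2 := mul_nonneg hACpos.le (sq_nonneg _)
        have h4 : (A*C - B^2)*(y t - v2)^2 = 0 :=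
          le_antisymm (by nlinarith [sq_nonneg (A*(x t - v1) + B*(y t - v2))]) h3
        have hzy : y t - v2 = 0 :=
          sq_eq_zero_iff.mp ((mul_eq_zero.mp h4).resolve_left (ne_of_gt hACpos))
        have e2 : (A*(x t - v1))^2 = 0 := by
          rw [hzy] at e
          linear_combination e
        have hzx : x t - v1 = 0 := by
          have := sq_eq_zero_iff.mp e2
          rcases mul_eq_zero.mp this with h5 | h5
          · exact absurd h5 (ne_of_gt hA)
          · exact h5
        constructor <;> linarith
      have hdx0 : dx 0 = 0 := by
        have h1 := hx 0
        rw [show x = fun _ => v1 from funext fun t => (hxy t).1] at h1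
        exact h1.unique (hasDerivAt_const 0 v1)
      have hdy0 : dy 0 = 0 := by
        have h1 := hy 0
        rw [show y = fun _ => v2 from funext fun t => (hxy t).2] at h1
        exact h1.unique (hasDerivAt_const 0 v2)
      have h := hw 0
      rw [hdx0, hdy0] at h
      norm_num at h
  exact ⟨A, B, C, ρ, v1, v2, hρpos, hA, hACpos, hfinal⟩

private lemma quad_pos (A B C : ℝ) (hA : 0 < A) (hAC : 0 < A*C - B^2) (u v : ℝ)
    (huv : ¬ (u = 0 ∧ v = 0)) : 0 < A*(u*u) + 2*B*(u*v) + C*(v*v) := by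
  by_cases hv : v = 0
  · have hu : u ≠ 0 := fun h => huv ⟨h, hv⟩
    rw [hv]
    have : 0 < u * u := mul_self_pos.2 hu
    nlinarith
  · have hv2 : 0 < v * v := mul_self_pos.2 hv
    have hRHS : 0 < (A*u + B*v)^2 + (A*C - B^2)*(v*v) :=
      add_pos_of_nonneg_of_pos (sq_nonneg _) (mul_pos hAC hv2)
    have hqA : A * (A*(u*u) + 2*B*(u*v) + C*(v*v)) = (A*u + B*v)^2 + (A*C - B^2)*(v*v) := by
      ring
    by_contra h0
    push_neg at h0
    exact absurd (hqA ▸ hRHS) (not_lt.2 (mul_nonpos_of_nonneg_of_nonpos hA.le h0))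

set_option maxHeartbeats 1000000 in
/-- For `a = 1/3` (the affine isoperimetric exponent), every closed curve in
centroaffine parameterization whose function `F = p^{−2/3}` satisfies the
integrated Euler–Lagrange equation `F'' = 2F^{−1/2} + c` is a (possibly
multiply traversed, not necessarily centered) ellipse. -/
theorem extremal_one_third_is_conic
    (γ : ℝ → ℝ × ℝ) (hγ : ContDiff ℝ (⊤ : ℕ∞) γ) (hper : Function.Periodic γ (2 * π))
    (hcentro : ∀ t, br (γ t) (deriv γ t) = 1)
    (hp : ∀ t, 0 < br (deriv γ t) (deriv (deriv γ) t))
    (c : ℝ) (F : ℝ → ℝ)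
    (hF : F = fun t => (br (deriv γ t) (deriv (deriv γ) t)) ^ (-(2:ℝ)/3))
    (hode : ∀ t, deriv (deriv F) t = 2 * F t ^ (-(1:ℝ)/2) + c) :
    ∃ (S : Matrix (Fin 2) (Fin 2) ℝ) (v : ℝ × ℝ), S.IsSymm ∧ S.PosDef ∧
      ∀ t, dotProduct
        (S.mulVec ![(γ t).1 - v.1, (γ t).2 - v.2]) ![(γ t).1 - v.1, (γ t).2 - v.2] = 1 := by
  have hsm : ContDiff ℝ (⊤:ℕ∞) γ := hγ.of_le (by simp)
  have hγd : Differentiable ℝ γ := hsm.differentiable (by simp)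
  have hd1 : ContDiff ℝ (⊤:ℕ∞) (deriv γ) := (contDiff_infty_iff_deriv.mp hsm).2
  have hγd2 : Differentiable ℝ (deriv γ) := hd1.differentiable (by simp)
  have hd2 : ContDiff ℝ (⊤:ℕ∞) (deriv (deriv γ)) := (contDiff_infty_iff_deriv.mp hd1).2
  -- component derivatives
  have hx : ∀ t, HasDerivAt (fun s => (γ s).1) ((deriv γ t).1) t := fun t =>
    ((ContinuousLinearMap.fst ℝ ℝ ℝ).hasFDerivAt).comp_hasDerivAt t (hγd t).hasDerivAt
  have hy : ∀ t, HasDerivAt (fun s => (γ s).2) ((deriv γ t).2) t := fun t =>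
    ((ContinuousLinearMap.snd ℝ ℝ ℝ).hasFDerivAt).comp_hasDerivAt t (hγd t).hasDerivAt
  have hdx : ∀ t, HasDerivAt (fun s => (deriv γ s).1) ((deriv (deriv γ) t).1) t := fun t =>
    ((ContinuousLinearMap.fst ℝ ℝ ℝ).hasFDerivAt).comp_hasDerivAt t (hγd2 t).hasDerivAt
  have hdy : ∀ t, HasDerivAt (fun s => (deriv γ s).2) ((deriv (deriv γ) t).2) t := fun t =>
    ((ContinuousLinearMap.snd ℝ ℝ ℝ).hasFDerivAt).comp_hasDerivAt t (hγd2 t).hasDerivAt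
  have hw : ∀ t, (γ t).1 * (deriv γ t).2 - (γ t).2 * (deriv γ t).1 = 1 := hcentro
  have hp0 : ∀ t, 0 < (deriv γ t).1 * (deriv (deriv γ) t).2
      - (deriv γ t).2 * (deriv (deriv γ) t).1 := hp
  -- smoothness of F
  have hpc : ContDiff ℝ (⊤:ℕ∞) (fun t => (deriv γ t).1 * (deriv (deriv γ) t).2
      - (deriv γ t).2 * (deriv (deriv γ) t).1) :=
    ((contDiff_fst.comp hd1).mul (contDiff_snd.comp hd2)).sub
      ((contDiff_snd.comp hd1).mul (contDiff_fst.comp hd2))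
  have hFs : ContDiff ℝ (⊤:ℕ∞) F := by
    rw [hF]
    refine contDiff_iff_contDiffAt.mpr fun t => ?_
    exact (Real.contDiffAt_rpow_const_of_ne (ne_of_gt (hp t))).comp t hpc.contDiffAt
  -- minus sign of c via periodicity
  have hc : c < 0 := by
    have hdper : Function.Periodic (deriv γ) (2 * π) := by
      intro t
      have h1 : (fun s => γ (s + 2 * π)) = γ := funext fun s => hper s
      calc deriv γ (t + 2 * π) = deriv (fun s => γ (s + 2 * π)) t :=
            (deriv_comp_add_const γ (2*π) t).symm
        _ = deriv γ t := by rw [h1]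
    have hddper : Function.Periodic (deriv (deriv γ)) (2 * π) := by
      intro t
      have h1 : (fun s => deriv γ (s + 2 * π)) = deriv γ := funext fun s => hdper s
      calc deriv (deriv γ) (t + 2 * π) = deriv (fun s => deriv γ (s + 2 * π)) t :=
            (deriv_comp_add_const (deriv γ) (2*π) t).symm
        _ = deriv (deriv γ) t := by rw [h1]
    have hFper : Function.Periodic F (2 * π) := by
      intro t
      rw [hF]
      simp only [hdper t, hddper t]
    have hF'per : Function.Periodic (deriv F) (2 * π) := by
      intro t
      have h1 : (fun s => F (s + 2 * π)) = F := funext fun s => hFper s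
      calc deriv F (t + 2 * π) = deriv (fun s => F (s + 2 * π)) t :=
            (deriv_comp_add_const F (2*π) t).symm
        _ = deriv F t := by rw [h1]
    have hF'd : Differentiable ℝ (deriv F) :=
      ((contDiff_infty_iff_deriv.mp hFs).2).differentiable (by simp)
    have hF''cont : Continuous (deriv (deriv F)) :=
      ((contDiff_infty_iff_deriv.mp (contDiff_infty_iff_deriv.mp hFs).2).2).continuous
    have hπ : (0:ℝ) < 2 * π := by positivity
    have hint : ∫ t in (0:ℝ)..(2*π), deriv (deriv F) t = deriv F (2*π) - deriv F 0 :=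
      intervalIntegral.integral_deriv_eq_sub (fun t _ => hF'd t)
        (hF''cont.intervalIntegrable _ _)
    have hzero : deriv F (2*π) = deriv F 0 := by
      have := hF'per 0
      simpa using this
    rw [hzero, sub_self] at hint
    have hFcont : Continuous F := hFs.continuous
    have hF0 : ∀ t, 0 < F t := by
      intro t; rw [hF]; exact Real.rpow_pos_of_pos (hp t) _
    have hgcont : Continuous (fun t => 2 * F t ^ (-(1:ℝ)/2)) := by
      refine continuous_iff_continuousAt.mpr fun t => ?_
      exact (continuousAt_const.mul
        ((Real.continuousAt_rpow_const _ _ (Or.inl (hF0 t).ne')).comp hFcont.continuousAt))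
    have heq : (fun t => deriv (deriv F) t) = fun t => 2 * F t ^ (-(1:ℝ)/2) + c :=
      funext hode
    rw [heq] at hint
    rw [intervalIntegral.integral_add (hgcont.intervalIntegrable _ _)
      (intervalIntegrable_const)] at hint
    have hpos : 0 < ∫ t in (0:ℝ)..(2*π), 2 * F t ^ (-(1:ℝ)/2) := by
      refine intervalIntegral.intervalIntegral_pos_of_pos (hgcont.intervalIntegrable _ _) ?_ (by positivity)
      intro t
      have := hF0 t
      positivity
    rw [intervalIntegral.integral_const] at hint
    simp only [smul_eq_mul, sub_zero] at hint
    nlinarith [Real.pi_pos]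
  obtain ⟨A, B, C, ρ, v1, v2, hρ, hA, hAC, hfin⟩ :=
    scalar_main (fun t => (γ t).1) (fun t => (γ t).2)
      (fun t => (deriv γ t).1) (fun t => (deriv γ t).2)
      (fun t => (deriv (deriv γ) t).1) (fun t => (deriv (deriv γ) t).2)
      F c hx hy hdx hdy hw hp0 hF hFs hode hc
  refine ⟨ρ⁻¹ • !![A, B; B, C], (v1, v2), ?_, ?_, ?_⟩
  · show (ρ⁻¹ • !![A, B; B, C])ᵀ = ρ⁻¹ • !![A, B; B, C]
    ext i j
    fin_cases i <;> fin_cases j <;> rfl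
  · rw [Matrix.posDef_iff_dotProduct_mulVec]
    constructor
    · show (ρ⁻¹ • !![A, B; B, C])ᴴ = ρ⁻¹ • !![A, B; B, C]
      ext i j
      fin_cases i <;> fin_cases j <;> rfl
    · intro z hz
      have hz' : ¬ (z 0 = 0 ∧ z 1 = 0) := by
        rintro ⟨h0, h1⟩
        apply hz
        funext i
        fin_cases i
        · exact h0
        · exact h1
      have hq := quad_pos A B C hA hAC (z 0) (z 1) hz'
      have : star z ⬝ᵥ (ρ⁻¹ • !![A, B; B, C]) *ᵥ z
          = ρ⁻¹ * (A*(z 0*z 0) + 2*B*(z 0*z 1) + C*(z 1*z 1)) := by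
        simp [dotProduct, Matrix.mulVec, Fin.sum_univ_two, Matrix.smul_apply]
        ring
      rw [this]
      exact mul_pos (inv_pos.2 hρ) hq
  · intro t
    have h := hfin t
    have hexp : (ρ⁻¹ • !![A, B; B, C]).mulVec ![(γ t).1 - v1, (γ t).2 - v2] ⬝ᵥ
        ![(γ t).1 - v1, (γ t).2 - v2]
        = ρ⁻¹ * (A*((γ t).1 - v1)^2 + 2*B*(((γ t).1 - v1)*((γ t).2 - v2)) + C*((γ t).2 - v2)^2) := by
      simp [dotProduct, Matrix.mulVec, Fin.sum_univ_two, Matrix.smul_apply]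
      ring
    show (ρ⁻¹ • !![A, B; B, C]).mulVec ![(γ t).1 - v1, (γ t).2 - v2] ⬝ᵥ
        ![(γ t).1 - v1, (γ t).2 - v2] = 1
    rw [hexp, h]
    field_simp
end

section
/- Let b ∈ ℝ with b ≠ −1 and b ≠ −2, let c, d ∈ ℝ, and let F: ℝ → ℝ be a smooth, positive, periodic, non-constant function satisfying (F')² = −(4/(b+1))·F^{b+2} + 2c·F + d. Then F has exactly two critical values: for every t with F'(t) = 0, either F(t) = max F or F(t) = min F. -/
open Real

/-- A generalized trinomial `u·x^q + v·x + w` with `u ≠ 0`, `q ∉ {0,1}` has at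
most two positive roots (Descartes-type bound). -/
lemma trinomial_roots (u q v w : ℝ) (hu : u ≠ 0) (hq0 : q ≠ 0) (hq1 : q ≠ 1)
    (x₁ x₂ x₃ : ℝ) (h1 : 0 < x₁) (h12 : x₁ < x₂) (h23 : x₂ < x₃)
    (e1 : u * x₁ ^ q + v * x₁ + w = 0) (e2 : u * x₂ ^ q + v * x₂ + w = 0)
    (e3 : u * x₃ ^ q + v * x₃ + w = 0) : False := by
  set g : ℝ → ℝ := fun x => u * x ^ q + v * x + w with hg
  have hderiv : ∀ x : ℝ, 0 < x → HasDerivAt g (u * q * x ^ (q - 1) + v) x := by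
    intro x hx
    have h1 : HasDerivAt (fun x : ℝ => x ^ q) (q * x ^ (q - 1)) x :=
      Real.hasDerivAt_rpow_const (Or.inl hx.ne')
    have h2 := ((h1.const_mul u).add ((hasDerivAt_id x).const_mul v)).add_const w
    rw [show u * q * x ^ (q - 1) + v = u * (q * x ^ (q - 1)) + v * 1 by ring]
    exact h2
  have h2pos : 0 < x₂ := h1.trans h12
  have h3pos : 0 < x₃ := h2pos.trans h23
  have hcont : ∀ a b : ℝ, 0 < a → ContinuousOn g (Set.Icc a b) := by
    intro a b ha x hx
    exact (hderiv x (lt_of_lt_of_le ha hx.1)).continuousAt.continuousWithinAt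
  -- Rolle on [x₁, x₂] and [x₂, x₃]
  obtain ⟨y₁, hy₁, hdy₁⟩ := exists_hasDerivAt_eq_zero h12 (hcont x₁ x₂ h1)
    (e1.trans e2.symm) (fun x hx => hderiv x (h1.trans hx.1))
  obtain ⟨y₂, hy₂, hdy₂⟩ := exists_hasDerivAt_eq_zero h23 (hcont x₂ x₃ h2pos)
    (e2.trans e3.symm) (fun x hx => hderiv x (h2pos.trans hx.1))
  have hy₁pos : 0 < y₁ := h1.trans hy₁.1
  have hy₂pos : 0 < y₂ := h2pos.trans hy₂.1
  have hlt : y₁ < y₂ := hy₁.2.trans hy₂.1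
  have huq : u * q ≠ 0 := mul_ne_zero hu hq0
  have hpow : y₁ ^ (q - 1) = y₂ ^ (q - 1) := by
    have h' : u * q * y₁ ^ (q - 1) = u * q * y₂ ^ (q - 1) := by linarith [hdy₁, hdy₂]
    exact mul_left_cancel₀ huq h'
  have hlog : Real.log y₁ = Real.log y₂ := by
    have h1' := Real.log_rpow hy₁pos (q - 1)
    have h2' := Real.log_rpow hy₂pos (q - 1)
    have : (q - 1) * Real.log y₁ = (q - 1) * Real.log y₂ := by
      rw [← h1', ← h2', hpow]
    exact mul_left_cancel₀ (sub_ne_zero.2 hq1) this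
  have : y₁ = y₂ := by
    have := congrArg Real.exp hlog
    rwa [Real.exp_log hy₁pos, Real.exp_log hy₂pos] at this
  exact absurd this hlt.ne

/-- A smooth, positive, periodic, non-constant solution `F` of the first
integral `(F')² = −(4/(b+1))F^{b+2} + 2cF + d` of the Euler–Lagrange equation
has exactly two critical values: at every critical point, `F` attains either
its maximum or its minimum. -/
theorem two_critical_values (b c d : ℝ) (hb1 : b ≠ -1) (hb2 : b ≠ -2)
    (F : ℝ → ℝ) (hF : ContDiff ℝ (⊤ : ℕ∞) F) (hpos : ∀ t, 0 < F t)
    (T : ℝ) (hT : 0 < T) (hper : Function.Periodic F T)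
    (hnonconst : ∃ s t : ℝ, F s ≠ F t)
    (hode : ∀ t, (deriv F t)^2 = -(4 / (b + 1)) * F t ^ (b + 2) + 2 * c * F t + d) :
    ∀ t, deriv F t = 0 → F t = sSup (Set.range F) ∨ F t = sInf (Set.range F) := by
  have hcontF : Continuous F := hF.continuous
  have hdiffF : Differentiable ℝ F := hF.differentiable (by simp)
  have himg : F '' Set.Icc 0 (0 + T) = Set.range F := hper.image_Icc hT 0
  -- maximum
  obtain ⟨t₀, ht₀mem, ht₀max⟩ := (isCompact_Icc : IsCompact (Set.Icc (0:ℝ) (0 + T))).exists_isMaxOn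
    (Set.nonempty_Icc.2 (by linarith)) hcontF.continuousOn
  obtain ⟨t₁, ht₁mem, ht₁min⟩ := (isCompact_Icc : IsCompact (Set.Icc (0:ℝ) (0 + T))).exists_isMinOn
    (Set.nonempty_Icc.2 (by linarith)) hcontF.continuousOn
  have hglobmax : ∀ s, F s ≤ F t₀ := by
    intro s
    obtain ⟨s', hs', hss'⟩ := himg ▸ Set.mem_range_self s
    exact hss' ▸ ht₀max hs'
  have hglobmin : ∀ s, F t₁ ≤ F s := by
    intro s
    obtain ⟨s', hs', hss'⟩ := himg ▸ Set.mem_range_self s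
    exact hss' ▸ ht₁min hs'
  have hMgreatest : IsGreatest (Set.range F) (F t₀) :=
    ⟨Set.mem_range_self _, by rintro x ⟨s, rfl⟩; exact hglobmax s⟩
  have hmleast : IsLeast (Set.range F) (F t₁) :=
    ⟨Set.mem_range_self _, by rintro x ⟨s, rfl⟩; exact hglobmin s⟩
  have hM : sSup (Set.range F) = F t₀ := hMgreatest.csSup_eq
  have hm : sInf (Set.range F) = F t₁ := hmleast.csInf_eq
  have hd0 : deriv F t₀ = 0 :=
    IsLocalMax.deriv_eq_zero (Filter.Eventually.of_forall hglobmax)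
  have hd1 : deriv F t₁ = 0 :=
    IsLocalMin.deriv_eq_zero (Filter.Eventually.of_forall hglobmin)
  -- the trinomial vanishes at every critical value
  have hroot : ∀ t, deriv F t = 0 →
      -(4 / (b + 1)) * F t ^ (b + 2) + 2 * c * F t + d = 0 := by
    intro t ht
    have := hode t
    rw [ht] at this
    linarith [this]
  have hmM : F t₁ < F t₀ := by
    rcases lt_or_eq_of_le (hglobmin t₀) with h | h
    · exact h
    · exfalso
      obtain ⟨s, t, hst⟩ := hnonconst
      have h1 := hglobmax s; have h2 := hglobmin s
      have h3 := hglobmax t; have h4 := hglobmin t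
      exact hst (by linarith)
  intro t ht
  by_contra hcon
  push_neg at hcon
  obtain ⟨hne1, hne2⟩ := hcon
  rw [hM] at hne1; rw [hm] at hne2
  have hlt1 : F t₁ < F t := lt_of_le_of_ne (hglobmin t) (Ne.symm hne2)
  have hlt2 : F t < F t₀ := lt_of_le_of_ne (hglobmax t) hne1
  have hu : -(4 / (b + 1)) ≠ 0 := by
    have : b + 1 ≠ 0 := by intro h; exact hb1 (by linarith)
    simp [div_eq_zero_iff, this]
  have hq0 : b + 2 ≠ 0 := by intro h; exact hb2 (by linarith)
  have hq1 : b + 2 ≠ 1 := by intro h; exact hb1 (by linarith)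
  exact trinomial_roots (-(4 / (b + 1))) (b + 2) (2 * c) d hu hq0 hq1
    (F t₁) (F t) (F t₀) (hpos t₁) hlt1 hlt2
    (hroot t₁ hd1) (hroot t ht) (hroot t₀ hd0)
end
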